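/- arXiv:2602.14208 — 5 statements merged into one kernel-verified Lean document; each statement's English description precedes it below -/
import Mathlib

section
/- Consider linear regression with features φ(x) ~ N(0,H) and label y = ⟨φ(x), θ*⟩ + ε with ε ~ N(0,σ²) independent of x. For the per-sample gradient ∇ℓ(z;θ) = φ(x)φ(x)^T(θ - θ*) - φ(x)ε of the squared loss ℓ(z;θ) = (⟨φ(x),θ⟩ - y)²/2, the noise covariance Σ(θ) = E[(∇ℓ - E∇ℓ)(∇ℓ - E∇ℓ)^T] equals H u u^T H + (u^T H u) H + σ² H where u = θ - θ*. Consequently, (2E(θ) + σ²) H ⪯ Σ(θ) ⪯ (4E(θ) + σ²) H, where E(θ) = (1/2)(θ-θ*)^T H (θ-θ*). -/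
/-!
Write the per-sample gradient as `(⟨u, φ⟩ - ε) φ`. Since `ε` is independent of `φ`, centred, with
variance `σ²`, the second moment of the gradient is `E[⟨u, φ⟩² φ φᵀ] + σ² E[φ φᵀ]`. Every moment of
`φ` is read off from its one-dimensional marginals `⟨a, φ⟩ ~ N(0, aᵀHa)`, whose second and fourth
moments are derivatives at `0` of the moment generating function `exp (v t² / 2)`; polarization then
gives Isserlis' formula `E[⟨a,φ⟩² ⟨b,φ⟩ ⟨c,φ⟩] = (aᵀHa)(bᵀHc) + 2 (aᵀHb)(aᵀHc)`. Subtracting the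
squared mean `H u uᵀ H` leaves `Σ = H u uᵀ H + (uᵀHu) H + σ² H`, and the two Loewner bounds reduce
to `H u uᵀ H ⪰ 0` and to Cauchy–Schwarz `(xᵀHu)² ≤ (uᵀHu)(xᵀHx)` for the form of `H`.
-/

open Matrix MeasureTheory ProbabilityTheory Real
open scoped NNReal ENNReal

lemma deriv_mul_exp_half_mul_sq (c : ℝ) {p p' : ℝ → ℝ} (hp : ∀ t, HasDerivAt p (p' t) t) :
    deriv (fun t => p t * exp (c * t ^ 2 / 2)) =
      fun t => (p' t + c * t * p t) * exp (c * t ^ 2 / 2) := by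
  funext t
  have he : HasDerivAt (fun t => exp (c * t ^ 2 / 2)) (exp (c * t ^ 2 / 2) * (c * t)) t := by
    convert (((hasDerivAt_pow 2 t).const_mul c).div_const 2).exp using 1
    push_cast
    ring
  exact ((hp t).mul he).deriv.trans (by ring)

lemma iteratedDeriv_exp_half_mul_sq_zero (c : ℝ) :
    iteratedDeriv 1 (fun t => exp (c * t ^ 2 / 2)) 0 = 0 ∧
    iteratedDeriv 2 (fun t => exp (c * t ^ 2 / 2)) 0 = c ∧
    iteratedDeriv 4 (fun t => exp (c * t ^ 2 / 2)) 0 = 3 * c ^ 2 := by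
  have d1 : deriv (fun t => exp (c * t ^ 2 / 2)) = fun t => c * t * exp (c * t ^ 2 / 2) := by
    simpa using deriv_mul_exp_half_mul_sq c (fun t => hasDerivAt_const t (1 : ℝ))
  have d2 : deriv (fun t => c * t * exp (c * t ^ 2 / 2)) =
      fun t => (c + c ^ 2 * t ^ 2) * exp (c * t ^ 2 / 2) := by
    rw [deriv_mul_exp_half_mul_sq c (fun t => ((hasDerivAt_id' t).const_mul c))]
    ring_nf
  have d3 : deriv (fun t => (c + c ^ 2 * t ^ 2) * exp (c * t ^ 2 / 2)) =
      fun t => (3 * c ^ 2 * t + c ^ 3 * t ^ 3) * exp (c * t ^ 2 / 2) := by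
    rw [deriv_mul_exp_half_mul_sq c (fun t => ((hasDerivAt_pow 2 t).const_mul (c ^ 2)).const_add c)]
    push_cast
    ring_nf
  have d4 : deriv (fun t => (3 * c ^ 2 * t + c ^ 3 * t ^ 3) * exp (c * t ^ 2 / 2)) 0 =
      3 * c ^ 2 := by
    rw [deriv_mul_exp_half_mul_sq c (fun t => ((hasDerivAt_id' t).const_mul (3 * c ^ 2)).fun_add
      ((hasDerivAt_pow 3 t).const_mul (c ^ 3)))]
    simp
  simp [iteratedDeriv_succ', d1, d2, d3, d4]

section GaussianMoments

variable {Ω : Type*} [MeasurableSpace Ω] {μ : Measure Ω} {X : Ω → ℝ} {v : ℝ≥0}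

lemma integrableExpSet_eq_univ_of_map_eq_gaussianReal (hX : μ.map X = gaussianReal 0 v) :
    integrableExpSet X μ = Set.univ := by
  have hXm : AEMeasurable X μ := aemeasurable_of_map_neZero (by rw [hX]; infer_instance)
  ext t
  simp only [integrableExpSet, Set.mem_ofPred_eq, Set.mem_univ, iff_true]
  have := integrable_exp_mul_gaussianReal (μ := 0) (v := v) t
  rw [← hX, integrable_map_measure (by fun_prop) hXm] at this
  exact this

lemma memLp_of_map_eq_gaussianReal (hX : μ.map X = gaussianReal 0 v) (p : ℝ≥0) :
    MemLp X p μ :=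
  memLp_of_mem_interior_integrableExpSet
    (by simp [integrableExpSet_eq_univ_of_map_eq_gaussianReal hX]) p

lemma integral_pow_of_map_eq_gaussianReal (hX : μ.map X = gaussianReal 0 v) (n : ℕ) :
    ∫ ω, X ω ^ n ∂μ = iteratedDeriv n (fun t => exp (v * t ^ 2 / 2)) 0 := by
  have hmgf : mgf X μ = fun t => exp (v * t ^ 2 / 2) := by
    funext t
    rw [mgf_gaussianReal hX]
    ring_nf
  have h0 : (0 : ℝ) ∈ interior (integrableExpSet X μ) := by
    simp [integrableExpSet_eq_univ_of_map_eq_gaussianReal hX]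
  simpa [hmgf] using (iteratedDeriv_mgf_zero h0 n).symm

lemma integral_of_map_eq_gaussianReal (hX : μ.map X = gaussianReal 0 v) : ∫ ω, X ω ∂μ = 0 := by
  simpa using
    (integral_pow_of_map_eq_gaussianReal hX 1).trans (iteratedDeriv_exp_half_mul_sq_zero v).1

lemma integral_sq_of_map_eq_gaussianReal (hX : μ.map X = gaussianReal 0 v) :
    ∫ ω, X ω ^ 2 ∂μ = v :=
  (integral_pow_of_map_eq_gaussianReal hX 2).trans (iteratedDeriv_exp_half_mul_sq_zero v).2.1

lemma integral_pow_four_of_map_eq_gaussianReal (hX : μ.map X = gaussianReal 0 v) :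
    ∫ ω, X ω ^ 4 ∂μ = 3 * v ^ 2 :=
  (integral_pow_of_map_eq_gaussianReal hX 4).trans (iteratedDeriv_exp_half_mul_sq_zero v).2.2

end GaussianMoments

lemma integrable_mul_mul_mul_of_memLp_four {Ω : Type*} [MeasurableSpace Ω] {μ : Measure Ω}
    {f g h k : Ω → ℝ} (hf : MemLp f 4 μ) (hg : MemLp g 4 μ) (hh : MemLp h 4 μ)
    (hk : MemLp k 4 μ) :
    Integrable (fun ω => f ω * g ω * h ω * k ω) μ := by
  have : ENNReal.HolderTriple 4 4 2 := ⟨by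
    rw [← two_mul, show (4 : ℝ≥0∞) = 2 * 2 by norm_num, ENNReal.mul_inv (by simp) (by simp),
      ← mul_assoc, ENNReal.mul_inv_cancel two_ne_zero ENNReal.ofNat_ne_top, one_mul]⟩
  have hfg : MemLp (f * g) 2 μ := hg.mul hf
  have hhk : MemLp (h * k) 2 μ := hk.mul hh
  refine (hfg.integrable_mul hhk).congr (.of_forall fun ω => ?_)
  simp only [Pi.mul_apply, mul_assoc]

namespace Matrix

variable {ι : Type*} [Fintype ι] {H : Matrix ι ι ℝ}

lemma IsSymm.dotProduct_mulVec_comm (hH : H.IsSymm) (a b : ι → ℝ) :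
    a ⬝ᵥ H *ᵥ b = b ⬝ᵥ H *ᵥ a := by
  rw [dotProduct_mulVec, dotProduct_comm, ← vecMul_transpose, hH.eq]

lemma IsSymm.add_dotProduct_mulVec_add (hH : H.IsSymm) (a b : ι → ℝ) :
    (a + b) ⬝ᵥ H *ᵥ (a + b) = a ⬝ᵥ H *ᵥ a + 2 * (a ⬝ᵥ H *ᵥ b) + b ⬝ᵥ H *ᵥ b := by
  simp only [mulVec_add, dotProduct_add, add_dotProduct, hH.dotProduct_mulVec_comm b a]
  ring

lemma IsSymm.sub_dotProduct_mulVec_sub (hH : H.IsSymm) (a b : ι → ℝ) :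
    (a - b) ⬝ᵥ H *ᵥ (a - b) = a ⬝ᵥ H *ᵥ a - 2 * (a ⬝ᵥ H *ᵥ b) + b ⬝ᵥ H *ᵥ b := by
  simp only [mulVec_sub, dotProduct_sub, sub_dotProduct, hH.dotProduct_mulVec_comm b a]
  ring

lemma IsSymm.mul_vecMulVec_mul (hH : H.IsSymm) (u : ι → ℝ) :
    H * vecMulVec u u * H = vecMulVec (H *ᵥ u) (H *ᵥ u) := by
  rw [mul_vecMulVec, vecMulVec_mul, ← vecMul_transpose, hH.eq]

lemma PosSemidef.dotProduct_mulVec_sq_le (hH : H.PosSemidef) (a b : ι → ℝ) :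
    (a ⬝ᵥ H *ᵥ b) ^ 2 ≤ (a ⬝ᵥ H *ᵥ a) * (b ⬝ᵥ H *ᵥ b) := by
  have hsymm : H.IsSymm := isHermitian_iff_isSymm.mp hH.isHermitian
  have hquad : ∀ t : ℝ,
      0 ≤ (a ⬝ᵥ H *ᵥ a) * (t * t) + 2 * (a ⬝ᵥ H *ᵥ b) * t + b ⬝ᵥ H *ᵥ b := by
    intro t
    have := hH.dotProduct_mulVec_nonneg (t • a + b)
    rw [star_trivial, hsymm.add_dotProduct_mulVec_add] at this
    simp only [mulVec_smul, dotProduct_smul, smul_dotProduct, smul_eq_mul] at this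
    linarith
  have := discrim_le_zero hquad
  rw [discrim] at this
  linarith

lemma PosSemidef.dotProduct_mulVec_smul_sub_vecMulVec (hH : H.PosSemidef) (u : ι → ℝ) :
    ((u ⬝ᵥ H *ᵥ u) • H - vecMulVec (H *ᵥ u) (H *ᵥ u)).PosSemidef := by
  have hsymm : H.IsSymm := isHermitian_iff_isSymm.mp hH.isHermitian
  have hvv := posSemidef_vecMulVec_self_star (H *ᵥ u)
  rw [star_trivial] at hvv
  refine .of_dotProduct_mulVec_nonneg
    ((hH.isHermitian.smul (IsSelfAdjoint.all _)).sub hvv.isHermitian) fun x => ?_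
  rw [star_trivial, sub_mulVec, smul_mulVec, dotProduct_sub, dotProduct_smul, vecMulVec_mulVec,
    op_smul_eq_smul, dotProduct_smul, dotProduct_comm (H *ᵥ u) x, hsymm.dotProduct_mulVec_comm x u,
    smul_eq_mul, smul_eq_mul]
  nlinarith [hH.dotProduct_mulVec_sq_le u x]

end Matrix

section GaussianVector

variable {ι Ω : Type*} [Fintype ι] [MeasurableSpace Ω]

/-- `φ ~ N(0, H)`, stated through the laws of its one-dimensional marginals (Cramér–Wold). -/
def IsCenteredGaussianWithCov (φ : Ω → ι → ℝ) (H : Matrix ι ι ℝ) (μ : Measure Ω) : Prop :=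
  ∀ a : ι → ℝ, μ.map (fun ω => a ⬝ᵥ φ ω) = gaussianReal 0 (a ⬝ᵥ H *ᵥ a).toNNReal

namespace IsCenteredGaussianWithCov

variable {μ : Measure Ω} {φ : Ω → ι → ℝ} {H : Matrix ι ι ℝ}

lemma aemeasurable (hφ : IsCenteredGaussianWithCov φ H μ) : AEMeasurable φ μ := by
  classical
  refine aemeasurable_pi_lambda _ fun i => ?_
  have := aemeasurable_of_map_neZero (f := fun ω => Pi.single i 1 ⬝ᵥ φ ω)
    (by rw [hφ]; infer_instance)
  simpa only [single_dotProduct, one_mul] using this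

lemma memLp_dotProduct (hφ : IsCenteredGaussianWithCov φ H μ) (a : ι → ℝ) (p : ℝ≥0) :
    MemLp (fun ω => a ⬝ᵥ φ ω) p μ :=
  memLp_of_map_eq_gaussianReal (hφ a) p

lemma memLp_apply (hφ : IsCenteredGaussianWithCov φ H μ) (i : ι) (p : ℝ≥0) :
    MemLp (fun ω => φ ω i) p μ := by
  classical
  simpa only [single_dotProduct, one_mul] using hφ.memLp_dotProduct (Pi.single i 1) p

lemma integrable_dotProduct_pow_four (hφ : IsCenteredGaussianWithCov φ H μ) (a : ι → ℝ) :
    Integrable (fun ω => (a ⬝ᵥ φ ω) ^ 4) μ := by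
  have ha := hφ.memLp_dotProduct a 4
  exact (integrable_mul_mul_mul_of_memLp_four ha ha ha ha).congr (.of_forall fun ω => by ring)

lemma integral_dotProduct_sq (hφ : IsCenteredGaussianWithCov φ H μ) (hH : H.PosSemidef)
    (a : ι → ℝ) : ∫ ω, (a ⬝ᵥ φ ω) ^ 2 ∂μ = a ⬝ᵥ H *ᵥ a := by
  rw [integral_sq_of_map_eq_gaussianReal (hφ a),
    Real.coe_toNNReal _ (by simpa using hH.dotProduct_mulVec_nonneg a)]

lemma integral_dotProduct_pow_four (hφ : IsCenteredGaussianWithCov φ H μ) (hH : H.PosSemidef)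
    (a : ι → ℝ) : ∫ ω, (a ⬝ᵥ φ ω) ^ 4 ∂μ = 3 * (a ⬝ᵥ H *ᵥ a) ^ 2 := by
  rw [integral_pow_four_of_map_eq_gaussianReal (hφ a),
    Real.coe_toNNReal _ (by simpa using hH.dotProduct_mulVec_nonneg a)]

lemma integral_dotProduct_mul (hφ : IsCenteredGaussianWithCov φ H μ) (hH : H.PosSemidef)
    (a b : ι → ℝ) : ∫ ω, (a ⬝ᵥ φ ω) * (b ⬝ᵥ φ ω) ∂μ = a ⬝ᵥ H *ᵥ b := by
  have hH' : H.IsSymm := isHermitian_iff_isSymm.mp hH.isHermitian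
  have h1 := (hφ.memLp_dotProduct (a + b) 2).integrable_sq
  have h2 := (hφ.memLp_dotProduct a 2).integrable_sq
  have h3 := (hφ.memLp_dotProduct b 2).integrable_sq
  have hpol : ∀ ω, (a ⬝ᵥ φ ω) * (b ⬝ᵥ φ ω) =
      (((a + b) ⬝ᵥ φ ω) ^ 2 - (a ⬝ᵥ φ ω) ^ 2 - (b ⬝ᵥ φ ω) ^ 2) / 2 := fun ω => by
    rw [add_dotProduct]; ring
  simp_rw [hpol]
  rw [integral_div, integral_sub (by fun_prop) h3, integral_sub h1 h2]
  simp only [hφ.integral_dotProduct_sq hH, hH'.add_dotProduct_mulVec_add]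
  ring

lemma integral_dotProduct_sq_mul_sq (hφ : IsCenteredGaussianWithCov φ H μ) (hH : H.PosSemidef)
    (a b : ι → ℝ) :
    ∫ ω, (a ⬝ᵥ φ ω) ^ 2 * (b ⬝ᵥ φ ω) ^ 2 ∂μ =
      (a ⬝ᵥ H *ᵥ a) * (b ⬝ᵥ H *ᵥ b) + 2 * (a ⬝ᵥ H *ᵥ b) ^ 2 := by
  have hH' : H.IsSymm := isHermitian_iff_isSymm.mp hH.isHermitian
  have h1 := hφ.integrable_dotProduct_pow_four (a + b)
  have h2 := hφ.integrable_dotProduct_pow_four (a - b)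
  have h3 := hφ.integrable_dotProduct_pow_four a
  have h4 := hφ.integrable_dotProduct_pow_four b
  have hpol : ∀ ω, (a ⬝ᵥ φ ω) ^ 2 * (b ⬝ᵥ φ ω) ^ 2 =
      (((a + b) ⬝ᵥ φ ω) ^ 4 + ((a - b) ⬝ᵥ φ ω) ^ 4 - 2 * (a ⬝ᵥ φ ω) ^ 4
        - 2 * (b ⬝ᵥ φ ω) ^ 4) / 12 := fun ω => by
    rw [add_dotProduct, sub_dotProduct]; ring
  simp_rw [hpol]
  rw [integral_div, integral_sub (by fun_prop) (by fun_prop),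
    integral_sub (by fun_prop) (by fun_prop), integral_add h1 h2,
    integral_const_mul, integral_const_mul]
  simp only [hφ.integral_dotProduct_pow_four hH, hH'.add_dotProduct_mulVec_add,
    hH'.sub_dotProduct_mulVec_sub]
  ring

lemma integral_dotProduct_sq_mul_mul (hφ : IsCenteredGaussianWithCov φ H μ) (hH : H.PosSemidef)
    (a b c : ι → ℝ) :
    ∫ ω, (a ⬝ᵥ φ ω) ^ 2 * (b ⬝ᵥ φ ω) * (c ⬝ᵥ φ ω) ∂μ =
      (a ⬝ᵥ H *ᵥ a) * (b ⬝ᵥ H *ᵥ c) + 2 * (a ⬝ᵥ H *ᵥ b) * (a ⬝ᵥ H *ᵥ c) := by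
  have hH' : H.IsSymm := isHermitian_iff_isSymm.mp hH.isHermitian
  have h22 : ∀ d, Integrable (fun ω => (a ⬝ᵥ φ ω) ^ 2 * (d ⬝ᵥ φ ω) ^ 2) μ := fun d =>
    (integrable_mul_mul_mul_of_memLp_four (hφ.memLp_dotProduct a 4) (hφ.memLp_dotProduct a 4)
      (hφ.memLp_dotProduct d 4) (hφ.memLp_dotProduct d 4)).congr (.of_forall fun ω => by ring)
  have hpol : ∀ ω, (a ⬝ᵥ φ ω) ^ 2 * (b ⬝ᵥ φ ω) * (c ⬝ᵥ φ ω) =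
      ((a ⬝ᵥ φ ω) ^ 2 * ((b + c) ⬝ᵥ φ ω) ^ 2 - (a ⬝ᵥ φ ω) ^ 2 * ((b - c) ⬝ᵥ φ ω) ^ 2) / 4 :=
    fun ω => by rw [add_dotProduct, sub_dotProduct]; ring
  simp_rw [hpol]
  rw [integral_div, integral_sub (h22 _) (h22 _), hφ.integral_dotProduct_sq_mul_sq hH,
    hφ.integral_dotProduct_sq_mul_sq hH, hH'.add_dotProduct_mulVec_add,
    hH'.sub_dotProduct_mulVec_sub, mulVec_add, mulVec_sub, dotProduct_add, dotProduct_sub]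
  ring

lemma integral_sub_sq_mul_mul (hφ : IsCenteredGaussianWithCov φ H μ) (hH : H.PosSemidef)
    {ε : Ω → ℝ} {s : ℝ≥0} (hε : μ.map ε = gaussianReal 0 s) (hind : IndepFun φ ε μ)
    (u : ι → ℝ) (i j : ι) :
    ∫ ω, (u ⬝ᵥ φ ω - ε ω) ^ 2 * φ ω i * φ ω j ∂μ =
      (u ⬝ᵥ H *ᵥ u) * H i j + 2 * (H *ᵥ u) i * (H *ᵥ u) j + s * H i j := by
  classical
  have hH' : H.IsSymm := isHermitian_iff_isSymm.mp hH.isHermitian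
  have hεm : AEMeasurable ε μ := aemeasurable_of_map_neZero (by rw [hε]; infer_instance)
  have hε4 : MemLp ε 4 μ := memLp_of_map_eq_gaussianReal hε 4
  have hu := hφ.memLp_dotProduct u 4
  have hi := hφ.memLp_apply i 4
  have hj := hφ.memLp_apply j 4
  have hT1 : Integrable (fun ω => (u ⬝ᵥ φ ω) ^ 2 * φ ω i * φ ω j) μ :=
    (integrable_mul_mul_mul_of_memLp_four hu hu hi hj).congr (.of_forall fun ω => by ring)
  have hT2 : Integrable (fun ω => (u ⬝ᵥ φ ω) * φ ω i * φ ω j * ε ω) μ :=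
    integrable_mul_mul_mul_of_memLp_four hu hi hj hε4
  have hT3 : Integrable (fun ω => φ ω i * φ ω j * ε ω ^ 2) μ :=
    (integrable_mul_mul_mul_of_memLp_four hi hj hε4 hε4).congr (.of_forall fun ω => by ring)
  have hexp : ∀ ω, (u ⬝ᵥ φ ω - ε ω) ^ 2 * φ ω i * φ ω j =
      (u ⬝ᵥ φ ω) ^ 2 * φ ω i * φ ω j - 2 * ((u ⬝ᵥ φ ω) * φ ω i * φ ω j * ε ω)
        + φ ω i * φ ω j * ε ω ^ 2 := fun ω => by ring
  have hcross : ∫ ω, (u ⬝ᵥ φ ω) * φ ω i * φ ω j * ε ω ∂μ = 0 := by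
    rw [hind.integral_fun_comp_mul_comp (f := fun x => (u ⬝ᵥ x) * x i * x j) (g := fun e => e)
      hφ.aemeasurable hεm (by fun_prop) (by fun_prop)]
    simp [integral_of_map_eq_gaussianReal hε]
  have hnoise : ∫ ω, φ ω i * φ ω j * ε ω ^ 2 ∂μ = H i j * s := by
    have hij : ∫ ω, φ ω i * φ ω j ∂μ = H i j := by
      simpa using hφ.integral_dotProduct_mul hH (Pi.single i 1) (Pi.single j 1)
    rw [hind.integral_fun_comp_mul_comp (f := fun x => x i * x j) (g := fun e => e ^ 2)
      hφ.aemeasurable hεm (by fun_prop) (by fun_prop), integral_sq_of_map_eq_gaussianReal hε, hij]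
  have h211 := hφ.integral_dotProduct_sq_mul_mul hH u (Pi.single i 1) (Pi.single j 1)
  have hHe : ∀ k, u ⬝ᵥ H *ᵥ Pi.single k 1 = (H *ᵥ u) k := fun k => by
    rw [hH'.dotProduct_mulVec_comm, single_dotProduct, one_mul]
  rw [hHe, hHe] at h211
  simp only [single_dotProduct, one_mul, mulVec_single_one, col_apply] at h211
  simp_rw [hexp]
  rw [integral_add (by fun_prop) hT3, integral_sub hT1 (hT2.const_mul 2),
    integral_const_mul, h211, hcross, hnoise]
  ring

end IsCenteredGaussianWithCov

end GaussianVector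

theorem gradient_noise_covariance_general {N : ℕ} {Ω : Type*} [MeasurableSpace Ω]
    (μ : Measure Ω)
    (H : Matrix (Fin N) (Fin N) ℝ) (hH : H.PosSemidef) (σ : ℝ)
    (φ : Ω → Fin N → ℝ) (ε : Ω → ℝ)
    (hGauss : ∀ a : Fin N → ℝ,
      Measure.map (fun ω => a ⬝ᵥ φ ω) μ = gaussianReal 0 (a ⬝ᵥ H.mulVec a).toNNReal)
    (hε : Measure.map ε μ = gaussianReal 0 (σ ^ 2).toNNReal)
    (hindep : IndepFun φ ε μ)
    (θ θstar : Fin N → ℝ) :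
    -- the gradient noise covariance matrix
    let u : Fin N → ℝ := θ - θstar
    let grad : Ω → Fin N → ℝ := fun ω => (φ ω ⬝ᵥ u) • φ ω - ε ω • φ ω
    let Sigmat : Matrix (Fin N) (Fin N) ℝ := fun i j =>
      (∫ ω, grad ω i * grad ω j ∂μ) - H.mulVec u i * H.mulVec u j
    let Eθ : ℝ := (1 / 2) * (u ⬝ᵥ H.mulVec u)
    Sigmat = H * vecMulVec u u * H + (u ⬝ᵥ H.mulVec u) • H + σ ^ 2 • H ∧
    (Sigmat - (2 * Eθ + σ ^ 2) • H).PosSemidef ∧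
    ((4 * Eθ + σ ^ 2) • H - Sigmat).PosSemidef := by
  intro u grad Sigmat Eθ
  have hsymm : H.IsSymm := isHermitian_iff_isSymm.mp hH.isHermitian
  have hσ : ((σ ^ 2).toNNReal : ℝ) = σ ^ 2 := Real.coe_toNNReal _ (sq_nonneg σ)
  have hSigma : Sigmat = vecMulVec (H *ᵥ u) (H *ᵥ u) + (u ⬝ᵥ H *ᵥ u) • H + σ ^ 2 • H := by
    ext i j
    have hgrad : ∀ ω, grad ω i * grad ω j = (u ⬝ᵥ φ ω - ε ω) ^ 2 * φ ω i * φ ω j := fun ω => by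
      simp only [grad, Pi.sub_apply, Pi.smul_apply, smul_eq_mul, dotProduct_comm (φ ω) u]
      ring
    simp only [Sigmat, hgrad, IsCenteredGaussianWithCov.integral_sub_sq_mul_mul hGauss hH hε hindep,
      hσ, Matrix.add_apply, Matrix.smul_apply, vecMulVec_apply, smul_eq_mul]
    ring
  refine ⟨by rw [hSigma, hsymm.mul_vecMulVec_mul], ?_, ?_⟩
  · convert posSemidef_vecMulVec_self_star (H *ᵥ u) using 1
    rw [hSigma, star_trivial]
    simp only [Eθ]
    module
  · convert hH.dotProduct_mulVec_smul_sub_vecMulVec u using 1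
    rw [hSigma]
    simp only [Eθ]
    module

/-- For linear regression with Gaussian features `φ ~ N(0,H)` and label noise
`ε ~ N(0,σ²)` independent of the features, the covariance `Σ(θ)` of the per-sample
gradient `φ φᵀ (θ-θ*) - φ ε` equals `H u uᵀ H + (uᵀHu) H + σ² H` with `u = θ - θ*`,
and consequently `(2E(θ)+σ²) H ⪯ Σ(θ) ⪯ (4E(θ)+σ²) H` where `E(θ) = ½ uᵀHu`. -/
theorem gradient_noise_covariance {N : ℕ} {Ω : Type*} [MeasurableSpace Ω]
    (μ : Measure Ω) [IsProbabilityMeasure μ]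
    (H : Matrix (Fin N) (Fin N) ℝ) (hH : H.PosSemidef) (σ : ℝ)
    (φ : Ω → Fin N → ℝ) (ε : Ω → ℝ) (hφm : Measurable φ) (hεm : Measurable ε)
    (hGauss : ∀ a : Fin N → ℝ,
      Measure.map (fun ω => a ⬝ᵥ φ ω) μ = gaussianReal 0 (a ⬝ᵥ H.mulVec a).toNNReal)
    (hε : Measure.map ε μ = gaussianReal 0 (σ ^ 2).toNNReal)
    (hindep : IndepFun φ ε μ)
    (θ θstar : Fin N → ℝ) :
    -- the gradient noise covariance matrix
    let u : Fin N → ℝ := θ - θstar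
    let grad : Ω → Fin N → ℝ := fun ω => (φ ω ⬝ᵥ u) • φ ω - ε ω • φ ω
    let Sigmat : Matrix (Fin N) (Fin N) ℝ := fun i j =>
      (∫ ω, grad ω i * grad ω j ∂μ) - H.mulVec u i * H.mulVec u j
    let Eθ : ℝ := (1 / 2) * (u ⬝ᵥ H.mulVec u)
    Sigmat = H * vecMulVec u u * H + (u ⬝ᵥ H.mulVec u) • H + σ ^ 2 • H ∧
    (Sigmat - (2 * Eθ + σ ^ 2) • H).PosSemidef ∧
    ((4 * Eθ + σ ^ 2) • H - Sigmat).PosSemidef :=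
  gradient_noise_covariance_general μ H hH σ φ ε hGauss hε hindep θ θstar
end

section
/- Let β > 1 and K(t) = (t+1)^{-(2-1/β)}. For the two-stage batch schedule switching from B₁ to B₂ > B₁ at time t*, the noise-accumulation gap between the switched trajectory and the constant-B₂ trajectory at time t* + δ equals (η σ²)(1/B₁ - 1/B₂) ∫₀^{t*} K(t* + δ - t) dt, and for δ ≥ 1 and t* ≥ 1 we have ∫₀^{t*} K(t*+δ-t) dt ≍ δ^{-(1-1/β)} - (t*+δ)^{-(1-1/β)}, so this gap is bounded above and below by constant multiples of (1/B₁ - 1/B₂) η σ² (δ^{-(1-1/β)} - (t*+δ)^{-(1-1/β)}). -/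
open intervalIntegral MeasureTheory Real Set

/-- Fast catch-up: for the two-stage schedule switching from `B₁` to `B₂ > B₁` at time `t*`,
the noise-accumulation gap versus the constant-`B₂` trajectory at time `t* + δ` equals
`ησ²(1/B₁ - 1/B₂) ∫₀^{t*} K(t*+δ-t) dt` with `K(t) = (t+1)^{-(2-1/β)}`, and this kernel
integral is bounded above and below by constant multiples of
`δ^{-(1-1/β)} - (t*+δ)^{-(1-1/β)}` for `δ, t* ≥ 1`. -/
theorem fast_catch_up_gap (β η σ B₁ B₂ : ℝ) (hβ : 1 < β) (hη : 0 < η) (hσ : 0 < σ)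
    (hB₁ : 0 < B₁) (hB : B₁ < B₂) :
    (∀ tstar δ : ℝ, 0 < tstar → 0 ≤ δ →
      (η * σ ^ 2 * ∫ τ in (0:ℝ)..(tstar + δ),
          (tstar + δ - τ + 1) ^ (-(2 - 1 / β)) / (if τ ≤ tstar then B₁ else B₂))
        - (η * σ ^ 2 * ∫ τ in (0:ℝ)..(tstar + δ), (tstar + δ - τ + 1) ^ (-(2 - 1 / β)) / B₂)
      = η * σ ^ 2 * (1 / B₁ - 1 / B₂)
          * ∫ t in (0:ℝ)..tstar, (tstar + δ - t + 1) ^ (-(2 - 1 / β))) ∧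
    ∃ c₁ c₂ : ℝ, 0 < c₁ ∧ 0 < c₂ ∧ ∀ tstar δ : ℝ, 1 ≤ tstar → 1 ≤ δ →
      c₁ * (δ ^ (-(1 - 1 / β)) - (tstar + δ) ^ (-(1 - 1 / β)))
        ≤ (∫ t in (0:ℝ)..tstar, (tstar + δ - t + 1) ^ (-(2 - 1 / β))) ∧
      (∫ t in (0:ℝ)..tstar, (tstar + δ - t + 1) ^ (-(2 - 1 / β)))
        ≤ c₂ * (δ ^ (-(1 - 1 / β)) - (tstar + δ) ^ (-(1 - 1 / β))) := by
  have hβ0 : (0:ℝ) < β := lt_trans one_pos hβ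
  have hib : 0 < 1 / β := by positivity
  have hib1 : 1 / β < 1 := (div_lt_one hβ0).mpr hβ
  have hB₂ : 0 < B₂ := lt_trans hB₁ hB
  constructor
  · -- Part 1: exact gap formula
    intro tstar δ ht hδ
    have htT : tstar ≤ tstar + δ := by linarith
    set K : ℝ → ℝ := fun τ => (tstar + δ - τ + 1) ^ (-(2 - 1 / β)) with hK
    have hKc : ∀ a b : ℝ, 0 ≤ a → b ≤ tstar + δ → ContinuousOn K (Set.Icc a b) := by
      intro a b ha hb
      apply ContinuousOn.rpow_const
      · exact (((continuous_const.sub continuous_id').add continuous_const).continuousOn)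
      · intro x hx
        left
        have h1 := hx.1; have h2 := hx.2
        have : (1:ℝ) ≤ tstar + δ - x + 1 := by linarith
        linarith
    have hi1 : IntervalIntegrable (fun τ => K τ / B₁) volume 0 tstar := by
      apply ContinuousOn.intervalIntegrable
      rw [Set.uIcc_of_le ht.le]
      exact (hKc 0 tstar le_rfl htT).div_const _
    have hi2 : IntervalIntegrable (fun τ => K τ / B₂) volume 0 tstar := by
      apply ContinuousOn.intervalIntegrable
      rw [Set.uIcc_of_le ht.le]
      exact (hKc 0 tstar le_rfl htT).div_const _
    have hi3 : IntervalIntegrable (fun τ => K τ / B₂) volume tstar (tstar + δ) := by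
      apply ContinuousOn.intervalIntegrable
      rw [Set.uIcc_of_le htT]
      exact (hKc tstar (tstar + δ) ht.le le_rfl).div_const _
    set g : ℝ → ℝ := fun τ => K τ / (if τ ≤ tstar then B₁ else B₂) with hg
    have hgeq1 : Set.EqOn g (fun τ => K τ / B₁) (Set.uIcc 0 tstar) := by
      intro x hx
      rw [Set.uIcc_of_le ht.le] at hx
      simp only [hg, if_pos hx.2]
    have hg1 : IntervalIntegrable g volume 0 tstar := by
      apply ContinuousOn.intervalIntegrable
      refine ContinuousOn.congr ?_ hgeq1
      rw [Set.uIcc_of_le ht.le]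
      exact (hKc 0 tstar le_rfl htT).div_const _
    have hg2 : IntervalIntegrable g volume tstar (tstar + δ) := by
      rw [intervalIntegrable_iff]
      refine (intervalIntegrable_iff.mp hi3).congr_fun ?_ measurableSet_uIoc
      intro x hx
      rw [Set.uIoc_of_le htT] at hx
      simp only [hg, if_neg (not_le.mpr hx.1)]
    have hsplitg : (∫ τ in (0:ℝ)..(tstar + δ), g τ)
        = (∫ τ in (0:ℝ)..tstar, g τ) + ∫ τ in tstar..(tstar + δ), g τ :=
      (integral_add_adjacent_intervals hg1 hg2).symm
    have hsplit2 : (∫ τ in (0:ℝ)..(tstar + δ), K τ / B₂)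
        = (∫ τ in (0:ℝ)..tstar, K τ / B₂) + ∫ τ in tstar..(tstar + δ), K τ / B₂ :=
      (integral_add_adjacent_intervals hi2 hi3).symm
    have e1 : (∫ τ in (0:ℝ)..tstar, g τ) = ∫ τ in (0:ℝ)..tstar, K τ / B₁ :=
      intervalIntegral.integral_congr hgeq1
    have e2 : (∫ τ in tstar..(tstar + δ), g τ) = ∫ τ in tstar..(tstar + δ), K τ / B₂ := by
      apply intervalIntegral.integral_congr_ae
      apply Filter.Eventually.of_forall
      intro x hx
      rw [Set.uIoc_of_le htT] at hx
      simp only [hg, if_neg (not_le.mpr hx.1)]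
    show η * σ ^ 2 * (∫ τ in (0:ℝ)..(tstar + δ), g τ)
        - η * σ ^ 2 * (∫ τ in (0:ℝ)..(tstar + δ), K τ / B₂)
        = η * σ ^ 2 * (1 / B₁ - 1 / B₂) * ∫ t in (0:ℝ)..tstar, K t
    rw [hsplitg, hsplit2, e1, e2, intervalIntegral.integral_div, intervalIntegral.integral_div]
    simp only [intervalIntegral.integral_div]
    field_simp
    ring
  · -- Part 2: two-sided bounds
    set q : ℝ := 1 - 1 / β with hq
    have hq0 : 0 < q := by simp only [hq]; linarith
    clear_value q
    refine ⟨1 / (4 * q), 1 / q, by positivity, by positivity, ?_⟩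
    intro tstar δ ht hδ
    have hδ0 : (0:ℝ) < δ := lt_of_lt_of_le one_pos hδ
    have hT0 : (0:ℝ) < tstar + δ := by linarith
    have hδT : δ ≤ tstar + δ := by linarith
    have hz : -(q + 1) ≤ 0 := by linarith
    have hexp : -(2 - 1 / β) = -(q + 1) := by simp only [hq]; ring
    -- closed form for the difference as an integral
    have h0mem : (0:ℝ) ∉ Set.uIcc δ (tstar + δ) := by
      rw [Set.uIcc_of_le hδT]
      simp only [Set.mem_Icc, not_and]
      intro h; linarith
    have hD : δ ^ (-q) - (tstar + δ) ^ (-q)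
        = q * ∫ u in δ..(tstar + δ), u ^ (-(q + 1)) := by
      rw [integral_rpow (Or.inr ⟨by intro h; apply hq0.ne'; linarith [neg_injective h], h0mem⟩)]
      rw [show -(q + 1) + 1 = -q by ring, div_neg, mul_neg, ← mul_div_assoc,
        mul_div_cancel_left₀ _ hq0.ne']
      ring
    -- rewrite the kernel integral as a shifted rpow integral
    have hJ : (∫ t in (0:ℝ)..tstar, (tstar + δ - t + 1) ^ (-(2 - 1 / β)))
        = ∫ u in δ..(tstar + δ), (u + 1) ^ (-(q + 1)) := by
      rw [hexp]
      have hfun : (fun t : ℝ => (tstar + δ - t + 1) ^ (-(q + 1)))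
          = fun t : ℝ => ((tstar + δ + 1) - t) ^ (-(q + 1)) := by
        funext t; congr 1; ring
      rw [hfun, intervalIntegral.integral_comp_sub_left (fun u => u ^ (-(q + 1))) (tstar + δ + 1)]
      rw [show tstar + δ + 1 - tstar = δ + 1 by ring, sub_zero]
      rw [← intervalIntegral.integral_comp_add_right (fun u => u ^ (-(q + 1))) 1]
    -- integrability on [δ, tstar+δ]
    have hic : ContinuousOn (fun u : ℝ => u ^ (-(q + 1))) (Set.Icc δ (tstar + δ)) := by
      apply ContinuousOn.rpow_const continuous_id.continuousOn
      intro x hx; left; intro h; simp only [id_eq] at h; linarith [hx.1, hδ0]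
    have hic2 : ContinuousOn (fun u : ℝ => (u + 1) ^ (-(q + 1))) (Set.Icc δ (tstar + δ)) := by
      apply ContinuousOn.rpow_const (continuous_id'.add continuous_const).continuousOn
      intro x hx; left; have := hx.1; intro h; simp only [Pi.add_apply] at h; linarith
    have hint1 : IntervalIntegrable (fun u : ℝ => u ^ (-(q + 1))) volume δ (tstar + δ) := by
      apply ContinuousOn.intervalIntegrable; rwa [Set.uIcc_of_le hδT]
    have hint2 : IntervalIntegrable (fun u : ℝ => (u + 1) ^ (-(q + 1))) volume δ (tstar + δ) := by
      apply ContinuousOn.intervalIntegrable; rwa [Set.uIcc_of_le hδT]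
    have h24 : (2:ℝ) ^ (-2:ℝ) = 1 / 4 := by
      rw [show (-2:ℝ) = ((-2:ℤ):ℝ) by norm_num, Real.rpow_intCast]; norm_num
    -- pointwise bounds
    have hpt_lo : ∀ u ∈ Set.Icc δ (tstar + δ),
        (1/4) * u ^ (-(q + 1)) ≤ (u + 1) ^ (-(q + 1)) := by
      intro u hu
      have hu1 : (1:ℝ) ≤ u := le_trans hδ hu.1
      have h1 : (2 * u) ^ (-(q + 1)) ≤ (u + 1) ^ (-(q + 1)) :=
        Real.rpow_le_rpow_of_nonpos (by linarith) (by linarith) hz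
      have h2 : (2 * u) ^ (-(q + 1)) = (2:ℝ) ^ (-(q + 1)) * u ^ (-(q + 1)) :=
        Real.mul_rpow (by norm_num) (by linarith)
      have h3 : (1/4 : ℝ) ≤ (2:ℝ) ^ (-(q + 1)) := by
        rw [← h24]
        exact Real.rpow_le_rpow_of_exponent_le one_le_two (by simp only [hq]; linarith)
      have h4 : (0:ℝ) ≤ u ^ (-(q + 1)) := Real.rpow_nonneg (by linarith) _
      calc (1/4) * u ^ (-(q + 1)) ≤ (2:ℝ) ^ (-(q + 1)) * u ^ (-(q + 1)) :=
            mul_le_mul_of_nonneg_right h3 h4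
        _ = (2 * u) ^ (-(q + 1)) := h2.symm
        _ ≤ (u + 1) ^ (-(q + 1)) := h1
    have hpt_hi : ∀ u ∈ Set.Icc δ (tstar + δ),
        (u + 1) ^ (-(q + 1)) ≤ u ^ (-(q + 1)) := by
      intro u hu
      have hu1 : (1:ℝ) ≤ u := le_trans hδ hu.1
      exact Real.rpow_le_rpow_of_nonpos (by linarith) (by linarith) hz
    have hmono_lo : (∫ u in δ..(tstar + δ), (1/4) * u ^ (-(q + 1)))
        ≤ ∫ u in δ..(tstar + δ), (u + 1) ^ (-(q + 1)) :=
      intervalIntegral.integral_mono_on hδT (hint1.const_mul _) hint2 hpt_lo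
    have hmono_hi : (∫ u in δ..(tstar + δ), (u + 1) ^ (-(q + 1)))
        ≤ ∫ u in δ..(tstar + δ), u ^ (-(q + 1)) :=
      intervalIntegral.integral_mono_on hδT hint2 hint1 hpt_hi
    rw [intervalIntegral.integral_const_mul] at hmono_lo
    constructor
    · rw [hJ, hD]
      calc 1 / (4 * q) * (q * ∫ u in δ..(tstar + δ), u ^ (-(q + 1)))
          = (1/4) * ∫ u in δ..(tstar + δ), u ^ (-(q + 1)) := by field_simp
        _ ≤ _ := hmono_lo
    · rw [hJ, hD]
      calc (∫ u in δ..(tstar + δ), (u + 1) ^ (-(q + 1)))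
          ≤ ∫ u in δ..(tstar + δ), u ^ (-(q + 1)) := hmono_hi
        _ = 1 / q * (q * ∫ u in δ..(tstar + δ), u ^ (-(q + 1))) := by field_simp
end

section
/- If s > 1 - 1/β (easy-task regime, β > 1) then for all sufficiently large D and all P ∈ [0,D], the derivative (1/B₁ - 1/B₂)[-s T_P^{-s-1} + K(T_P)/B₁ + K((D-P)/B₂)/B₂] of the two-stage final loss with respect to P is strictly positive, where T_P = P/B₁ + (D-P)/B₂ and K(t) = (t+1)^{-(2-1/β)}; hence the optimal switching point is P* = 0. -/
/-- Easy-task regime (`s > 1 - 1/β`): for sufficiently large `D`, the derivative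
`(1/B₁ - 1/B₂)[-s T_P^{-s-1} + K(T_P)/B₁ + K((D-P)/B₂)/B₂]` of the two-stage final loss
is strictly positive for all `P ∈ [0,D]`, where `T_P = P/B₁ + (D-P)/B₂` and
`K(t) = (t+1)^{-(2-1/β)}`; hence any `F` with this derivative is minimized at `P* = 0`. -/
theorem easy_task_no_switch (s β B₁ B₂ : ℝ) (hβ : 1 < β) (heasy : 1 - 1 / β < s)
    (hB₁ : 0 < B₁) (hB : B₁ < B₂) :
    ∃ D₀ : ℝ, ∀ D : ℝ, D₀ ≤ D →
      (∀ P ∈ Set.Icc (0:ℝ) D,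
        0 < (1 / B₁ - 1 / B₂) * (-s * (P / B₁ + (D - P) / B₂) ^ (-s - 1)
          + ((P / B₁ + (D - P) / B₂) + 1) ^ (-(2 - 1 / β)) / B₁
          + ((D - P) / B₂ + 1) ^ (-(2 - 1 / β)) / B₂)) ∧
      ∀ F : ℝ → ℝ,
        (∀ P ∈ Set.Icc (0:ℝ) D, HasDerivAt F
          ((1 / B₁ - 1 / B₂) * (-s * (P / B₁ + (D - P) / B₂) ^ (-s - 1)
            + ((P / B₁ + (D - P) / B₂) + 1) ^ (-(2 - 1 / β)) / B₁
            + ((D - P) / B₂ + 1) ^ (-(2 - 1 / β)) / B₂)) P) →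
        ∀ P ∈ Set.Icc (0:ℝ) D, P ≠ 0 → F 0 < F P := by
  have hB₂ : (0:ℝ) < B₂ := hB₁.trans hB
  have hβ0 : (0:ℝ) < β := by linarith
  have hs : 0 < s := by
    have : 1 / β < 1 := by
      rw [div_lt_one hβ0]; exact hβ
    linarith
  set a : ℝ := 2 - 1 / β with ha
  have ha1 : 1 < a := by
    have : 1 / β < 1 := by rw [div_lt_one hβ0]; exact hβ
    simp only [ha]; linarith
  have ha2 : a < 2 := by
    have : 0 < 1 / β := by positivity
    simp only [ha]; linarith
  set ε : ℝ := s + 1 - a with hε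
  have hε0 : 0 < ε := by simp only [hε, ha]; linarith
  set C : ℝ := (4 * s * B₁ + 1) ^ ε⁻¹ with hC
  have hC0 : 0 < C := Real.rpow_pos_of_pos (by positivity) _
  refine ⟨B₂ * max 1 C, ?_⟩
  intro D hD
  have hM1 : (1:ℝ) ≤ max 1 C := le_max_left _ _
  have hD0 : 0 < D := lt_of_lt_of_le (by nlinarith) hD
  -- key pointwise positivity
  have key : ∀ P ∈ Set.Icc (0:ℝ) D,
      0 < (1 / B₁ - 1 / B₂) * (-s * (P / B₁ + (D - P) / B₂) ^ (-s - 1)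
        + ((P / B₁ + (D - P) / B₂) + 1) ^ (-(2 - 1 / β)) / B₁
        + ((D - P) / B₂ + 1) ^ (-(2 - 1 / β)) / B₂) := by
    intro P hP
    obtain ⟨hP0, hPD⟩ := hP
    set T : ℝ := P / B₁ + (D - P) / B₂ with hT
    have hTge : D / B₂ ≤ T := by
      have h1 : P / B₂ ≤ P / B₁ := by
        apply div_le_div_of_nonneg_left hP0 hB₁ hB.le
      have : D / B₂ = P / B₂ + (D - P) / B₂ := by ring
      rw [this, hT]; linarith
    have hTM : max 1 C ≤ T := by
      refine le_trans ?_ hTge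
      rw [le_div_iff₀ hB₂]
      calc max 1 C * B₂ = B₂ * max 1 C := by ring
        _ ≤ D := hD
    have hT1 : (1:ℝ) ≤ T := le_trans hM1 hTM
    have hT0 : (0:ℝ) < T := by linarith
    -- (T+1)^(-a) ≥ (2T)^(-a)
    have h2T : (2 * T) ^ (-a) ≤ (T + 1) ^ (-a) := by
      rw [Real.rpow_neg (by positivity), Real.rpow_neg (by positivity)]
      apply inv_anti₀ (Real.rpow_pos_of_pos (by linarith) _)
      exact Real.rpow_le_rpow (by linarith) (by linarith) (by linarith)
    have hmul : (2 * T) ^ (-a) = 2 ^ (-a) * T ^ (-a) := by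
      rw [Real.mul_rpow (by norm_num) hT0.le]
    have h2a : (1:ℝ)/4 ≤ 2 ^ (-a) := by
      have : (2:ℝ) ^ (-2:ℝ) ≤ 2 ^ (-a) :=
        Real.rpow_le_rpow_of_exponent_le (by norm_num) (by linarith)
      have h4 : (2:ℝ) ^ (-2:ℝ) = 1/4 := by
        rw [show (-2:ℝ) = ((-2:ℤ):ℝ) by norm_num, Real.rpow_intCast]
        norm_num
      exact h4 ▸ this
    -- T^ε > 4sB₁
    have hTε : 4 * s * B₁ < T ^ ε := by
      have hCT : C ^ ε ≤ T ^ ε :=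
        Real.rpow_le_rpow hC0.le (le_trans (le_max_right _ _) hTM) hε0.le
      have hCε : C ^ ε = 4 * s * B₁ + 1 := by
        rw [hC, ← Real.rpow_mul (by positivity), inv_mul_cancel₀ hε0.ne', Real.rpow_one]
      nlinarith [hCε ▸ hCT]
    -- T^(-a) = T^ε * T^(-s-1)
    have hsplit : T ^ (-a) = T ^ ε * T ^ (-s - 1) := by
      rw [← Real.rpow_add hT0]
      congr 1
      simp only [hε]; ring
    have hpow_pos : 0 < T ^ (-s - 1) := Real.rpow_pos_of_pos hT0 _
    have hmain : s * T ^ (-s - 1) < (T + 1) ^ (-a) / B₁ := by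
      have h1 : 4 * s * B₁ * T ^ (-s - 1) < T ^ (-a) := by
        rw [hsplit]
        exact mul_lt_mul_of_pos_right hTε hpow_pos
      rw [lt_div_iff₀ hB₁]
      calc s * T ^ (-s - 1) * B₁ ≤ (1/4) * (4 * s * B₁ * T ^ (-s-1)) := by ring_nf; linarith
        _ < (1/4) * T ^ (-a) := by linarith
        _ ≤ 2 ^ (-a) * T ^ (-a) := by
            apply mul_le_mul_of_nonneg_right h2a (Real.rpow_nonneg hT0.le _)
        _ = (2 * T) ^ (-a) := hmul.symm
        _ ≤ (T + 1) ^ (-a) := h2T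
    have hthird : 0 ≤ ((D - P) / B₂ + 1) ^ (-a) / B₂ := by
      apply div_nonneg _ hB₂.le
      apply Real.rpow_nonneg
      have : 0 ≤ (D - P) / B₂ := div_nonneg (by linarith) hB₂.le
      linarith
    have hfac : 0 < 1 / B₁ - 1 / B₂ := by
      rw [sub_pos, div_lt_div_iff₀ hB₂ hB₁]
      nlinarith
    have hbr : 0 < -s * T ^ (-s - 1) + (T + 1) ^ (-a) / B₁
        + ((D - P) / B₂ + 1) ^ (-a) / B₂ := by linarith
    exact mul_pos hfac hbr
  refine ⟨key, ?_⟩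
  intro F hF P hP hPne
  have hmono : StrictMonoOn F (Set.Icc 0 D) := by
    apply strictMonoOn_of_deriv_pos (convex_Icc 0 D)
    · intro x hx
      exact (hF x hx).continuousAt.continuousWithinAt
    · intro x hx
      rw [interior_Icc] at hx
      have hx' : x ∈ Set.Icc (0:ℝ) D := ⟨hx.1.le, hx.2.le⟩
      rw [(hF x hx').deriv]
      exact key x hx'
  have h0 : (0:ℝ) ∈ Set.Icc (0:ℝ) D := ⟨le_refl _, hD0.le⟩
  exact hmono h0 hP (lt_of_le_of_ne hP.1 (Ne.symm hPne))
end

section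
/- For β > 1 and 0 < s < 1, the sum S(t) = Σ_{j=1}^∞ j^{-β} · j^{-(1+(s-1)β)} e^{-2 j^{-β} t} = Σ_j j^{-(1+sβ)} e^{-2 j^{-β} t} satisfies S(t) ≍ ∫₀¹ u^{s-1} e^{-2ut} du ≍ (t+1)^{-s} for large t. -/
open Real
private lemma exp_neg_le_four_div_sq {x : ℝ} (hx : 0 < x) : exp (-x) ≤ 4 / x ^ 2 := by
  have h1 : x / 2 + 1 ≤ exp (x / 2) := by have := Real.add_one_le_exp (x / 2); linarith
  have h3 : exp (x / 2) ^ 2 = exp x := by rw [sq, ← Real.exp_add]; ring_nf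
  have h2 : x ^ 2 / 4 ≤ exp x := by nlinarith [Real.exp_pos (x / 2)]
  rw [Real.exp_neg]
  have h4 : (0:ℝ) < x ^ 2 / 4 := by positivity
  calc (exp x)⁻¹ ≤ (x ^ 2 / 4)⁻¹ := by exact inv_anti₀ h4 h2
    _ = 4 / x ^ 2 := by field_simp

private lemma summable_base (p : ℝ) (hp : 1 < p) :
    Summable (fun j : ℕ => ((j : ℝ) + 1) ^ (-p)) := by
  have h := Real.summable_nat_rpow.mpr (show -p < -1 by linarith)
  have h2 := (summable_nat_add_iff 1).mpr h
  refine h2.congr fun j => ?_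
  push_cast
  ring_nf

private lemma summable_S {s β t : ℝ} (hp : 0 < s * β) (hβ : 0 < β) (ht : 0 ≤ t) :
    Summable (fun j : ℕ => ((j : ℝ) + 1) ^ (-(1 + s * β)) * exp (-2 * ((j : ℝ) + 1) ^ (-β) * t)) := by
  refine Summable.of_nonneg_of_le (fun j => by positivity) (fun j => ?_)
    (summable_base (1 + s * β) (by linarith))
  have hA : (0:ℝ) < (j : ℝ) + 1 := by positivity
  have h1 : exp (-2 * ((j : ℝ) + 1) ^ (-β) * t) ≤ 1 := by
    rw [Real.exp_le_one_iff]
    have : (0:ℝ) ≤ ((j : ℝ) + 1) ^ (-β) := le_of_lt (Real.rpow_pos_of_pos hA _)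
    nlinarith
  calc ((j : ℝ) + 1) ^ (-(1 + s * β)) * exp (-2 * ((j : ℝ) + 1) ^ (-β) * t)
      ≤ ((j : ℝ) + 1) ^ (-(1 + s * β)) * 1 := by
        apply mul_le_mul_of_nonneg_left h1 (le_of_lt (Real.rpow_pos_of_pos hA _))
    _ = ((j : ℝ) + 1) ^ (-(1 + s * β)) := mul_one _


private lemma S_upper (s β : ℝ) (hβ : 1 < β) (hs0 : 0 < s) (hs1 : s < 1) (t : ℝ) (ht : 1 ≤ t) :
    (∑' j : ℕ, ((j : ℝ) + 1) ^ (-(1 + s * β)) * exp (-2 * ((j : ℝ) + 1) ^ (-β) * t))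
      ≤ (2 ^ (β * (2 - s)) + 1 / (s * β)) * t ^ (-s) := by
  have ht0 : (0:ℝ) < t := by linarith
  have hb0 : (0:ℝ) < β := by linarith
  have hsb : (0:ℝ) < s * β := by positivity
  set N : ℕ := ⌈t ^ (1/β)⌉₊ with hN
  have hT1 : (1:ℝ) ≤ t ^ (1/β) := by
    calc (1:ℝ) = t ^ (0:ℝ) := (Real.rpow_zero t).symm
    _ ≤ t ^ (1/β) := Real.rpow_le_rpow_of_exponent_le ht (by positivity)
  have hTpos : (0:ℝ) < t ^ (1/β) := by linarith
  have hN1 : 1 ≤ N := Nat.ceil_pos.mpr hTpos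
  have hNt : t ^ (1/β) ≤ (N:ℝ) := Nat.le_ceil _
  have hNle : (N:ℝ) ≤ 2 * t ^ (1/β) := by
    have := Nat.ceil_lt_add_one (le_of_lt hTpos)
    rw [← hN] at this
    linarith
  have hNpos : (0:ℝ) < (N:ℝ) := by exact_mod_cast Nat.pos_of_ne_zero (by omega)
  -- exponent identity for t^{1/β} powers
  have hpow : ∀ c : ℝ, (t ^ (1/β)) ^ (β * c) = t ^ c := by
    intro c
    rw [← Real.rpow_mul (le_of_lt ht0)]
    congr 1; field_simp
  -- head term bound
  have key : ∀ j : ℕ, (j:ℝ) + 1 ≤ (N:ℝ) →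
      ((j : ℝ) + 1) ^ (-(1 + s * β)) * exp (-2 * ((j : ℝ) + 1) ^ (-β) * t)
        ≤ (N:ℝ) ^ (β * (2 - s) - 1) / t ^ 2 := by
    intro j hjN
    set A : ℝ := (j:ℝ) + 1 with hA
    have hA1 : (1:ℝ) ≤ A := by rw [hA]; have := Nat.cast_nonneg (α:=ℝ) j; linarith
    have hA0 : (0:ℝ) < A := by linarith
    have haβ : (0:ℝ) < A ^ (-β) := Real.rpow_pos_of_pos hA0 _
    have hx : (0:ℝ) < 2 * A ^ (-β) * t := by positivity
    have h1 : exp (-2 * A ^ (-β) * t) ≤ 4 / (2 * A ^ (-β) * t) ^ 2 := by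
      rw [show -2 * A ^ (-β) * t = -(2 * A ^ (-β) * t) by ring]
      exact exp_neg_le_four_div_sq hx
    have h2 : (4:ℝ) / (2 * A ^ (-β) * t) ^ 2 = A ^ (2*β) / t ^ 2 := by
      have e1 : (A ^ (-β)) ^ 2 = A ^ (-(2*β)) := by
        rw [sq, ← Real.rpow_add hA0]; congr 1; ring
      have e2 : (2 * A ^ (-β) * t) ^ 2 = 4 * A ^ (-(2*β)) * t ^ 2 := by
        rw [← e1]; ring
      rw [e2, Real.rpow_neg (le_of_lt hA0)]
      have h4 : A ^ (2*β) ≠ 0 := ne_of_gt (Real.rpow_pos_of_pos hA0 _)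
      field_simp
    have h3 : A ^ (-(1 + s * β)) * (A ^ (2*β) / t ^ 2) = A ^ (β * (2 - s) - 1) / t ^ 2 := by
      rw [div_eq_mul_inv, ← mul_assoc, ← Real.rpow_add hA0, ← div_eq_mul_inv]
      ring_nf
    have h5 : A ^ (β * (2 - s) - 1) ≤ (N:ℝ) ^ (β * (2 - s) - 1) := by
      apply Real.rpow_le_rpow (le_of_lt hA0) hjN
      nlinarith
    calc A ^ (-(1 + s * β)) * exp (-2 * A ^ (-β) * t)
        ≤ A ^ (-(1 + s * β)) * (A ^ (2*β) / t ^ 2) := by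
          apply mul_le_mul_of_nonneg_left _ (le_of_lt (Real.rpow_pos_of_pos hA0 _))
          rw [← h2]; exact h1
      _ = A ^ (β * (2 - s) - 1) / t ^ 2 := h3
      _ ≤ (N:ℝ) ^ (β * (2 - s) - 1) / t ^ 2 := by
          apply div_le_div_of_nonneg_right h5 (by positivity) |>.trans_eq rfl
  -- sum the head
  have hhead : ∑ j ∈ Finset.range N,
      ((j : ℝ) + 1) ^ (-(1 + s * β)) * exp (-2 * ((j : ℝ) + 1) ^ (-β) * t)
        ≤ 2 ^ (β * (2 - s)) * t ^ (-s) := by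
    have hsum : ∑ j ∈ Finset.range N,
        ((j : ℝ) + 1) ^ (-(1 + s * β)) * exp (-2 * ((j : ℝ) + 1) ^ (-β) * t)
          ≤ (N:ℝ) * ((N:ℝ) ^ (β * (2 - s) - 1) / t ^ 2) := by
      calc _ ≤ (Finset.range N).card • ((N:ℝ) ^ (β * (2 - s) - 1) / t ^ 2) := by
            apply Finset.sum_le_card_nsmul
            intro j hj
            apply key j
            have := Finset.mem_range.mp hj
            exact_mod_cast Nat.succ_le_of_lt this
        _ = (N:ℝ) * ((N:ℝ) ^ (β * (2 - s) - 1) / t ^ 2) := by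
            rw [Finset.card_range, nsmul_eq_mul]
    have e1 : (N:ℝ) * (N:ℝ) ^ (β * (2 - s) - 1) = (N:ℝ) ^ (β * (2 - s)) := by
      nth_rewrite 1 [← Real.rpow_one (N:ℝ)]
      rw [← Real.rpow_add hNpos]; ring_nf
    have e2 : (N:ℝ) ^ (β * (2 - s)) ≤ 2 ^ (β * (2 - s)) * t ^ (2 - s) := by
      calc (N:ℝ) ^ (β * (2 - s)) ≤ (2 * t ^ (1/β)) ^ (β * (2 - s)) := by
            apply Real.rpow_le_rpow (le_of_lt hNpos) hNle (by nlinarith)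
        _ = 2 ^ (β * (2 - s)) * t ^ (2 - s) := by
            rw [Real.mul_rpow (by norm_num) (le_of_lt hTpos), hpow]
    have e3 : t ^ (2 - s) / t ^ 2 = t ^ (-s) := by
      rw [← Real.rpow_natCast t 2, ← Real.rpow_sub ht0]
      norm_num
    calc _ ≤ (N:ℝ) * ((N:ℝ) ^ (β * (2 - s) - 1) / t ^ 2) := hsum
      _ = (N:ℝ) ^ (β * (2 - s)) / t ^ 2 := by rw [← e1]; ring
      _ ≤ 2 ^ (β * (2 - s)) * t ^ (2 - s) / t ^ 2 := by
          apply div_le_div_of_nonneg_right e2 (by positivity) |>.trans_eq rfl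
      _ = 2 ^ (β * (2 - s)) * t ^ (-s) := by rw [mul_div_assoc, e3]
  -- tail bound
  have htail : ∀ M : ℕ, ∑ i ∈ Finset.range M,
      (((i + N : ℕ) : ℝ) + 1) ^ (-(1 + s * β)) * exp (-2 * (((i + N : ℕ) : ℝ) + 1) ^ (-β) * t)
        ≤ t ^ (-s) / (s * β) := by
    intro M
    have hexp1 : ∀ i : ℕ, (((i + N : ℕ) : ℝ) + 1) ^ (-(1 + s * β)) *
        exp (-2 * (((i + N : ℕ) : ℝ) + 1) ^ (-β) * t) ≤ (((i + N : ℕ) : ℝ) + 1) ^ (-(1 + s * β)) := by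
      intro i
      have hA0 : (0:ℝ) < ((i + N : ℕ) : ℝ) + 1 := by positivity
      have h1 : exp (-2 * (((i + N : ℕ) : ℝ) + 1) ^ (-β) * t) ≤ 1 := by
        rw [Real.exp_le_one_iff]
        have := le_of_lt (Real.rpow_pos_of_pos hA0 (-β))
        nlinarith
      calc _ ≤ (((i + N : ℕ) : ℝ) + 1) ^ (-(1 + s * β)) * 1 :=
            mul_le_mul_of_nonneg_left h1 (le_of_lt (Real.rpow_pos_of_pos hA0 _))
        _ = _ := mul_one _
    have step1 : ∑ i ∈ Finset.range M,
        (((i + N : ℕ) : ℝ) + 1) ^ (-(1 + s * β)) * exp (-2 * (((i + N : ℕ) : ℝ) + 1) ^ (-β) * t)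
          ≤ ∑ i ∈ Finset.range M, (((i + N : ℕ) : ℝ) + 1) ^ (-(1 + s * β)) :=
      Finset.sum_le_sum fun i _ => hexp1 i
    have hIco : ∑ i ∈ Finset.range M, (((i + N : ℕ) : ℝ) + 1) ^ (-(1 + s * β))
        = ∑ k ∈ Finset.Ico N (N + M), (fun x : ℝ => x ^ (-(1 + s * β))) ((k + 1 : ℕ) : ℝ) := by
      rw [Finset.sum_Ico_eq_sum_range]
      simp only [Nat.add_sub_cancel_left]
      apply Finset.sum_congr rfl
      intro i _
      push_cast
      ring_nf
    have hanti : AntitoneOn (fun x : ℝ => x ^ (-(1 + s * β))) (Set.Icc (N:ℝ) ((N + M : ℕ):ℝ)) := by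
      intro x hx y hy hxy
      have hx0 : (0:ℝ) < x := lt_of_lt_of_le (by exact_mod_cast hNpos) hx.1
      exact Real.rpow_le_rpow_of_nonpos hx0 hxy (by linarith)
    have hNM : N ≤ N + M := Nat.le_add_right _ _
    have step2 := AntitoneOn.sum_le_integral_Ico hNM hanti
    have hInt : ∫ x in (N:ℝ)..((N + M : ℕ):ℝ), x ^ (-(1 + s * β))
        = (((N + M:ℕ):ℝ) ^ (-(s * β)) - (N:ℝ) ^ (-(s * β))) / (-(s * β)) := by
      rw [integral_rpow]
      · norm_num
      · right
        constructor
        · intro h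
          have : s * β = 0 := by linarith [neg_injective h]
          linarith
        · rw [Set.uIcc_of_le (by exact_mod_cast hNM)]
          intro hmem
          have := hmem.1
          linarith [show (1:ℝ) ≤ (N:ℝ) by exact_mod_cast hN1]
    have hIntLe : (∫ x in (N:ℝ)..((N + M : ℕ):ℝ), x ^ (-(1 + s * β)))
        ≤ (N:ℝ) ^ (-(s * β)) / (s * β) := by
      rw [hInt]
      have h1 : (0:ℝ) ≤ ((N + M:ℕ):ℝ) ^ (-(s * β)) :=
        Real.rpow_nonneg (by positivity) _
      have e : (((N + M:ℕ):ℝ) ^ (-(s * β)) - (N:ℝ) ^ (-(s * β))) / (-(s * β))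
          = ((N:ℝ) ^ (-(s * β)) - ((N + M:ℕ):ℝ) ^ (-(s * β))) / (s * β) := by
        rw [div_neg]; ring
      rw [e]
      gcongr
      linarith
    have hNs : (N:ℝ) ^ (-(s * β)) ≤ t ^ (-s) := by
      calc (N:ℝ) ^ (-(s * β)) ≤ (t ^ (1/β)) ^ (-(s * β)) :=
            Real.rpow_le_rpow_of_nonpos hTpos hNt (by nlinarith)
        _ = t ^ (-s) := by rw [show -(s*β) = β * (-s) by ring, hpow]
    calc _ ≤ ∑ i ∈ Finset.range M, (((i + N : ℕ) : ℝ) + 1) ^ (-(1 + s * β)) := step1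
      _ = _ := hIco
      _ ≤ ∫ x in (N:ℝ)..((N + M : ℕ):ℝ), x ^ (-(1 + s * β)) := step2
      _ ≤ (N:ℝ) ^ (-(s * β)) / (s * β) := hIntLe
      _ ≤ t ^ (-s) / (s * β) := by gcongr
  have hsum : Summable (fun j : ℕ => ((j : ℝ) + 1) ^ (-(1 + s * β)) * exp (-2 * ((j : ℝ) + 1) ^ (-β) * t)) :=
    summable_S hsb hb0 (by linarith)
  rw [← Summable.sum_add_tsum_nat_add N hsum]
  have htail' : (∑' i : ℕ, (((i + N : ℕ) : ℝ) + 1) ^ (-(1 + s * β)) * exp (-2 * (((i + N : ℕ) : ℝ) + 1) ^ (-β) * t))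
      ≤ t ^ (-s) / (s * β) :=
    Real.tsum_le_of_sum_range_le (fun n => by positivity) htail
  have e : (2 ^ (β * (2 - s)) + 1 / (s * β)) * t ^ (-s)
      = 2 ^ (β * (2 - s)) * t ^ (-s) + t ^ (-s) / (s * β) := by ring
  rw [e]
  exact add_le_add hhead htail'

private lemma S_lower (s β : ℝ) (hβ : 1 < β) (hs0 : 0 < s) (hs1 : s < 1) (t : ℝ) (ht : 1 ≤ t) :
    4 ^ (-(1 + s * β)) * exp (-2) * t ^ (-s)
      ≤ (∑' j : ℕ, ((j : ℝ) + 1) ^ (-(1 + s * β)) * exp (-2 * ((j : ℝ) + 1) ^ (-β) * t)) := by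
  have ht0 : (0:ℝ) < t := by linarith
  have hb0 : (0:ℝ) < β := by linarith
  have hsb : (0:ℝ) < s * β := by positivity
  set N : ℕ := ⌈t ^ (1/β)⌉₊ with hN
  have hT1 : (1:ℝ) ≤ t ^ (1/β) := by
    calc (1:ℝ) = t ^ (0:ℝ) := (Real.rpow_zero t).symm
    _ ≤ t ^ (1/β) := Real.rpow_le_rpow_of_exponent_le ht (by positivity)
  have hTpos : (0:ℝ) < t ^ (1/β) := by linarith
  have hN1 : 1 ≤ N := Nat.ceil_pos.mpr hTpos
  have hNt : t ^ (1/β) ≤ (N:ℝ) := Nat.le_ceil _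
  have hNle : (N:ℝ) ≤ 2 * t ^ (1/β) := by
    have := Nat.ceil_lt_add_one (le_of_lt hTpos)
    rw [← hN] at this
    linarith
  have hNpos : (0:ℝ) < (N:ℝ) := by exact_mod_cast Nat.pos_of_ne_zero (by omega)
  have hpow : ∀ c : ℝ, (t ^ (1/β)) ^ (β * c) = t ^ c := by
    intro c
    rw [← Real.rpow_mul (le_of_lt ht0)]
    congr 1; field_simp
  have hsum : Summable (fun j : ℕ => ((j : ℝ) + 1) ^ (-(1 + s * β)) * exp (-2 * ((j : ℝ) + 1) ^ (-β) * t)) :=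
    summable_S hsb hb0 (by linarith)
  -- lower bound each term on Ico N (2N)
  have hterm : ∀ j ∈ Finset.Ico N (2 * N),
      4 ^ (-(1 + s * β)) * (t ^ (1/β)) ^ (-(1 + s * β)) * exp (-2)
        ≤ ((j : ℝ) + 1) ^ (-(1 + s * β)) * exp (-2 * ((j : ℝ) + 1) ^ (-β) * t) := by
    intro j hj
    obtain ⟨hj1, hj2⟩ := Finset.mem_Ico.mp hj
    have hjR : (N:ℝ) ≤ (j:ℝ) := by exact_mod_cast hj1
    have hjR2 : (j:ℝ) < 2 * (N:ℝ) := by exact_mod_cast hj2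
    set A : ℝ := (j:ℝ) + 1 with hA
    have hA0 : (0:ℝ) < A := by positivity
    have hAge : t ^ (1/β) ≤ A := by simp only [hA]; linarith
    have hjR3 : (j:ℝ) + 1 ≤ 2 * (N:ℝ) := by exact_mod_cast Nat.succ_le_of_lt hj2
    have hAle : A ≤ 4 * t ^ (1/β) := by simp only [hA]; linarith
    -- exp part
    have h1 : exp (-2) ≤ exp (-2 * A ^ (-β) * t) := by
      apply Real.exp_le_exp.mpr
      have h2 : A ^ (-β) ≤ (t ^ (1/β)) ^ (-β) :=
        Real.rpow_le_rpow_of_nonpos hTpos hAge (by linarith)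
      have h3 : (t ^ (1/β)) ^ (-β) = t ^ (-1 : ℝ) := by
        rw [show (-β : ℝ) = β * (-1) by ring, hpow]
      have h4 : A ^ (-β) * t ≤ 1 := by
        calc A ^ (-β) * t ≤ t ^ (-1:ℝ) * t := by
              apply mul_le_mul_of_nonneg_right _ (le_of_lt ht0)
              rw [← h3]; exact h2
          _ = 1 := by rw [Real.rpow_neg_one]; field_simp
      nlinarith
    -- power part
    have h5 : (4 * t ^ (1/β)) ^ (-(1 + s * β)) ≤ A ^ (-(1 + s * β)) :=
      Real.rpow_le_rpow_of_nonpos hA0 hAle (by nlinarith)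
    have h6 : (4 * t ^ (1/β)) ^ (-(1 + s * β))
        = 4 ^ (-(1 + s * β)) * (t ^ (1/β)) ^ (-(1 + s * β)) := by
      rw [Real.mul_rpow (by norm_num) (le_of_lt hTpos)]
    calc 4 ^ (-(1 + s * β)) * (t ^ (1/β)) ^ (-(1 + s * β)) * exp (-2)
        ≤ A ^ (-(1 + s * β)) * exp (-2) := by
          apply mul_le_mul_of_nonneg_right _ (le_of_lt (Real.exp_pos _))
          rw [← h6]; exact h5
      _ ≤ A ^ (-(1 + s * β)) * exp (-2 * A ^ (-β) * t) := by
          apply mul_le_mul_of_nonneg_left h1 (le_of_lt (Real.rpow_pos_of_pos hA0 _))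
  -- sum over the window
  have hcard : (Finset.Ico N (2 * N)).card = N := by
    rw [Nat.card_Ico]; omega
  have hwin : (N:ℝ) * (4 ^ (-(1 + s * β)) * (t ^ (1/β)) ^ (-(1 + s * β)) * exp (-2))
      ≤ ∑ j ∈ Finset.Ico N (2 * N),
          ((j : ℝ) + 1) ^ (-(1 + s * β)) * exp (-2 * ((j : ℝ) + 1) ^ (-β) * t) := by
    have := Finset.card_nsmul_le_sum (Finset.Ico N (2 * N))
      (fun j => ((j : ℝ) + 1) ^ (-(1 + s * β)) * exp (-2 * ((j : ℝ) + 1) ^ (-β) * t))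
      (4 ^ (-(1 + s * β)) * (t ^ (1/β)) ^ (-(1 + s * β)) * exp (-2)) hterm
    rwa [hcard, nsmul_eq_mul] at this
  have hsub : ∑ j ∈ Finset.Ico N (2 * N),
      ((j : ℝ) + 1) ^ (-(1 + s * β)) * exp (-2 * ((j : ℝ) + 1) ^ (-β) * t)
        ≤ ∑' j : ℕ, ((j : ℝ) + 1) ^ (-(1 + s * β)) * exp (-2 * ((j : ℝ) + 1) ^ (-β) * t) :=
    Summable.sum_le_tsum _ (fun j _ => by positivity) hsum
  -- arithmetic: N * (t^{1/β})^{-(1+sβ)} ≥ t^{1/β} * (t^{1/β})^{-(1+sβ)} = t^{-s}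
  have harith : 4 ^ (-(1 + s * β)) * exp (-2) * t ^ (-s)
      ≤ (N:ℝ) * (4 ^ (-(1 + s * β)) * (t ^ (1/β)) ^ (-(1 + s * β)) * exp (-2)) := by
    have e1 : t ^ (1/β) * (t ^ (1/β)) ^ (-(1 + s * β)) = t ^ (-s) := by
      nth_rewrite 1 [← Real.rpow_one (t ^ (1/β))]
      rw [← Real.rpow_add hTpos, show (1 + -(1 + s * β) : ℝ) = β * (-s) by ring, hpow]
    have h7 : t ^ (1/β) * (4 ^ (-(1 + s * β)) * (t ^ (1/β)) ^ (-(1 + s * β)) * exp (-2))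
        ≤ (N:ℝ) * (4 ^ (-(1 + s * β)) * (t ^ (1/β)) ^ (-(1 + s * β)) * exp (-2)) := by
      apply mul_le_mul_of_nonneg_right hNt
      have := Real.rpow_pos_of_pos hTpos (-(1 + s * β))
      have h4p : (0:ℝ) < (4:ℝ) ^ (-(1 + s * β)) := Real.rpow_pos_of_pos (by norm_num) _
      positivity
    calc 4 ^ (-(1 + s * β)) * exp (-2) * t ^ (-s)
        = t ^ (1/β) * (4 ^ (-(1 + s * β)) * (t ^ (1/β)) ^ (-(1 + s * β)) * exp (-2)) := by
          rw [← e1]; ring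
      _ ≤ _ := h7
  linarith

private lemma I_integrable (s t a b : ℝ) (hs0 : 0 < s) :
    IntervalIntegrable (fun u : ℝ => u ^ (s - 1) * exp (-2 * u * t)) MeasureTheory.volume a b := by
  apply IntervalIntegrable.mul_continuousOn
  · exact intervalIntegral.intervalIntegrable_rpow' (by linarith)
  · exact (Real.continuous_exp.comp (by continuity)).continuousOn

private lemma I_lower (s t : ℝ) (hs0 : 0 < s) (hs1 : s < 1) (ht : 1 ≤ t) :
    exp (-2) / s * t ^ (-s) ≤ ∫ u in (0:ℝ)..1, u ^ (s - 1) * exp (-2 * u * t) := by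
  have ht0 : (0:ℝ) < t := by linarith
  have hinv : (0:ℝ) < 1 / t := by positivity
  have hinv1 : 1 / t ≤ 1 := by rw [div_le_one ht0]; linarith
  have hsplit : (∫ u in (0:ℝ)..1, u ^ (s - 1) * exp (-2 * u * t))
      = (∫ u in (0:ℝ)..(1/t), u ^ (s - 1) * exp (-2 * u * t))
        + ∫ u in (1/t)..1, u ^ (s - 1) * exp (-2 * u * t) :=
    (intervalIntegral.integral_add_adjacent_intervals
      (I_integrable s t _ _ hs0) (I_integrable s t _ _ hs0)).symm
  have hsecond : (0:ℝ) ≤ ∫ u in (1/t)..1, u ^ (s - 1) * exp (-2 * u * t) := by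
    apply intervalIntegral.integral_nonneg hinv1
    intro u hu
    have hu0 : 0 < u := lt_of_lt_of_le hinv hu.1
    positivity
  have hfirst : exp (-2) / s * t ^ (-s)
      ≤ ∫ u in (0:ℝ)..(1/t), u ^ (s - 1) * exp (-2 * u * t) := by
    have hmono : (∫ u in (0:ℝ)..(1/t), u ^ (s - 1) * exp (-2))
        ≤ ∫ u in (0:ℝ)..(1/t), u ^ (s - 1) * exp (-2 * u * t) := by
      apply intervalIntegral.integral_mono_on (le_of_lt hinv)
      · exact (intervalIntegral.intervalIntegrable_rpow' (by linarith)).mul_continuousOn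
          continuousOn_const
      · exact I_integrable s t _ _ hs0
      · intro u hu
        have hu0 : 0 ≤ u := hu.1
        have h1 : exp (-2) ≤ exp (-2 * u * t) := by
          apply Real.exp_le_exp.mpr
          have : u * t ≤ 1 := by
            calc u * t ≤ (1/t) * t := by
                  apply mul_le_mul_of_nonneg_right hu.2 (le_of_lt ht0)
              _ = 1 := by field_simp
          nlinarith
        apply mul_le_mul_of_nonneg_left h1 (Real.rpow_nonneg hu0 _)
    have hcomp : (∫ u in (0:ℝ)..(1/t), u ^ (s - 1) * exp (-2))
        = exp (-2) / s * t ^ (-s) := by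
      rw [intervalIntegral.integral_mul_const, integral_rpow (Or.inl (by linarith))]
      rw [Real.zero_rpow (by linarith), sub_zero]
      rw [show s - 1 + 1 = s by ring]
      rw [one_div, ← Real.rpow_neg_one t, ← Real.rpow_mul (le_of_lt ht0)]
      ring_nf
    linarith [hmono, hcomp.symm.le, hcomp.le]
  linarith

private lemma I_upper (s t : ℝ) (hs0 : 0 < s) (hs1 : s < 1) (ht : 1 ≤ t) :
    (∫ u in (0:ℝ)..1, u ^ (s - 1) * exp (-2 * u * t)) ≤ (1 / s + 1) * t ^ (-s) := by
  have ht0 : (0:ℝ) < t := by linarith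
  have hinv : (0:ℝ) < 1 / t := by positivity
  have hinv1 : 1 / t ≤ 1 := by rw [div_le_one ht0]; linarith
  have hsplit : (∫ u in (0:ℝ)..1, u ^ (s - 1) * exp (-2 * u * t))
      = (∫ u in (0:ℝ)..(1/t), u ^ (s - 1) * exp (-2 * u * t))
        + ∫ u in (1/t)..1, u ^ (s - 1) * exp (-2 * u * t) :=
    (intervalIntegral.integral_add_adjacent_intervals
      (I_integrable s t _ _ hs0) (I_integrable s t _ _ hs0)).symm
  have hfirst : (∫ u in (0:ℝ)..(1/t), u ^ (s - 1) * exp (-2 * u * t))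
      ≤ t ^ (-s) / s := by
    have hmono : (∫ u in (0:ℝ)..(1/t), u ^ (s - 1) * exp (-2 * u * t))
        ≤ ∫ u in (0:ℝ)..(1/t), u ^ (s - 1) := by
      apply intervalIntegral.integral_mono_on (le_of_lt hinv)
      · exact I_integrable s t _ _ hs0
      · exact intervalIntegral.intervalIntegrable_rpow' (by linarith)
      · intro u hu
        have h1 : exp (-2 * u * t) ≤ 1 := by
          rw [Real.exp_le_one_iff]
          nlinarith [hu.1]
        calc u ^ (s - 1) * exp (-2 * u * t) ≤ u ^ (s - 1) * 1 :=
              mul_le_mul_of_nonneg_left h1 (Real.rpow_nonneg hu.1 _)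
          _ = u ^ (s - 1) := mul_one _
    have hcomp : (∫ u in (0:ℝ)..(1/t), u ^ (s - 1)) = t ^ (-s) / s := by
      rw [integral_rpow (Or.inl (by linarith))]
      rw [Real.zero_rpow (by linarith), sub_zero, show s - 1 + 1 = s by ring]
      rw [one_div, ← Real.rpow_neg_one t, ← Real.rpow_mul (le_of_lt ht0)]
      ring_nf
    linarith
  have hsecond : (∫ u in (1/t)..1, u ^ (s - 1) * exp (-2 * u * t)) ≤ t ^ (-s) := by
    have hmono : (∫ u in (1/t)..1, u ^ (s - 1) * exp (-2 * u * t))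
        ≤ ∫ u in (1/t)..1, (t ^ (1 - s) / t ^ 2) * u ^ (-2 : ℝ) := by
      apply intervalIntegral.integral_mono_on hinv1
      · exact I_integrable s t _ _ hs0
      · apply IntervalIntegrable.continuousOn_mul
        · apply intervalIntegral.intervalIntegrable_rpow
          right
          rw [Set.uIcc_of_le hinv1]
          intro hmem
          linarith [hmem.1]
        · exact continuousOn_const
      · intro u hu
        have hu0 : 0 < u := lt_of_lt_of_le hinv hu.1
        have h1 : u ^ (s - 1) ≤ t ^ (1 - s) := by
          calc u ^ (s - 1) ≤ (1/t) ^ (s - 1) :=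
                Real.rpow_le_rpow_of_nonpos hinv hu.1 (by linarith)
            _ = t ^ (1 - s) := by
              rw [one_div, ← Real.rpow_neg_one t, ← Real.rpow_mul (le_of_lt ht0)]
              ring_nf
        have h2 : exp (-2 * u * t) ≤ 1 / (u ^ 2 * t ^ 2) := by
          have hx : (0:ℝ) < 2 * u * t := by positivity
          have := exp_neg_le_four_div_sq hx
          rw [show -(2 * u * t) = -2 * u * t by ring] at this
          calc exp (-2 * u * t) ≤ 4 / (2 * u * t) ^ 2 := this
            _ = 1 / (u ^ 2 * t ^ 2) := by ring
        have h3 : u ^ (-2 : ℝ) = 1 / u ^ 2 := by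
          rw [Real.rpow_neg (le_of_lt hu0), show (2:ℝ) = ((2:ℕ):ℝ) by norm_num,
            Real.rpow_natCast, one_div]
        calc u ^ (s - 1) * exp (-2 * u * t) ≤ t ^ (1 - s) * (1 / (u ^ 2 * t ^ 2)) := by
              apply mul_le_mul h1 h2 (le_of_lt (Real.exp_pos _)) (Real.rpow_nonneg (le_of_lt ht0) _)
          _ = (t ^ (1 - s) / t ^ 2) * u ^ (-2 : ℝ) := by rw [h3]; ring
    have hint2 : (∫ u in (1/t)..1, u ^ (-2 : ℝ)) = t - 1 := by
      rw [integral_rpow]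
      · norm_num
        rw [Real.rpow_neg_one, inv_inv]
        ring
      · right
        constructor
        · norm_num
        · rw [Set.uIcc_of_le hinv1]
          intro hmem
          linarith [hmem.1]
    have hcomp : (∫ u in (1/t)..1, (t ^ (1 - s) / t ^ 2) * u ^ (-2 : ℝ))
        = (t ^ (1 - s) / t ^ 2) * (t - 1) := by
      rw [intervalIntegral.integral_const_mul, hint2]
    have hpos : (0:ℝ) < t ^ (-s) := Real.rpow_pos_of_pos ht0 _
    have e0 : t ^ (1 - s) = t ^ (-s) * t := by
      rw [show (1 - s : ℝ) = -s + 1 by ring, Real.rpow_add ht0, Real.rpow_one]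
    have hle : (t ^ (1 - s) / t ^ 2) * (t - 1) ≤ t ^ (-s) := by
      rw [div_mul_eq_mul_div, div_le_iff₀ (by positivity), e0]
      nlinarith
    linarith
  have hfin : (1 / s + 1) * t ^ (-s) = t ^ (-s) / s + t ^ (-s) := by ring
  linarith


/-- For `β > 1` and `0 < s < 1`, the signal-learning sum
`S(t) = Σ_{j≥1} j^{-(1+sβ)} e^{-2 j^{-β} t}` is comparable, for large `t`, both to
`∫₀¹ u^{s-1} e^{-2ut} du` and to `(t+1)^{-s}`. -/
theorem signal_sum_integral_comparison (s β : ℝ) (hβ : 1 < β) (hs0 : 0 < s) (hs1 : s < 1) :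
    ∃ c₁ c₂ : ℝ, 0 < c₁ ∧ 0 < c₂ ∧ ∃ t₀ : ℝ, ∀ t : ℝ, t₀ ≤ t →
      (c₁ * (∫ u in (0:ℝ)..1, u ^ (s - 1) * exp (-2 * u * t))
          ≤ (∑' j : ℕ, ((j : ℝ) + 1) ^ (-(1 + s * β)) * exp (-2 * ((j : ℝ) + 1) ^ (-β) * t)) ∧
        (∑' j : ℕ, ((j : ℝ) + 1) ^ (-(1 + s * β)) * exp (-2 * ((j : ℝ) + 1) ^ (-β) * t))
          ≤ c₂ * ∫ u in (0:ℝ)..1, u ^ (s - 1) * exp (-2 * u * t)) ∧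
      (c₁ * (t + 1) ^ (-s)
          ≤ (∑' j : ℕ, ((j : ℝ) + 1) ^ (-(1 + s * β)) * exp (-2 * ((j : ℝ) + 1) ^ (-β) * t)) ∧
        (∑' j : ℕ, ((j : ℝ) + 1) ^ (-(1 + s * β)) * exp (-2 * ((j : ℝ) + 1) ^ (-β) * t))
          ≤ c₂ * (t + 1) ^ (-s)) := by
  set A : ℝ := 4 ^ (-(1 + s * β)) * exp (-2) with hAdef
  set B : ℝ := 2 ^ (β * (2 - s)) + 1 / (s * β) with hBdef
  set a : ℝ := exp (-2) / s with hadef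
  set b : ℝ := 1 / s + 1 with hbdef
  have hA : 0 < A := by
    have : (0:ℝ) < (4:ℝ) ^ (-(1 + s * β)) := Real.rpow_pos_of_pos (by norm_num) _
    have := Real.exp_pos (-2:ℝ)
    rw [hAdef]; positivity
  have hsb : (0:ℝ) < s * β := by nlinarith
  have hB : 0 < B := by
    have : (0:ℝ) < (2:ℝ) ^ (β * (2 - s)) := Real.rpow_pos_of_pos (by norm_num) _
    rw [hBdef]; positivity
  have ha : 0 < a := by
    have := Real.exp_pos (-2:ℝ)
    rw [hadef]; positivity
  have hb : 0 < b := by rw [hbdef]; positivity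
  refine ⟨min A (A / b), max (B * 2 ^ s) (B / a), lt_min hA (div_pos hA hb),
    lt_of_lt_of_le (by positivity : (0:ℝ) < B * 2 ^ s) (le_max_left _ _), 1, fun t ht => ?_⟩
  have ht0 : (0:ℝ) < t := by linarith
  have hSl : A * t ^ (-s)
      ≤ (∑' j : ℕ, ((j : ℝ) + 1) ^ (-(1 + s * β)) * exp (-2 * ((j : ℝ) + 1) ^ (-β) * t)) := by
    have := S_lower s β hβ hs0 hs1 t ht
    rw [hAdef]; exact this
  have hSu : (∑' j : ℕ, ((j : ℝ) + 1) ^ (-(1 + s * β)) * exp (-2 * ((j : ℝ) + 1) ^ (-β) * t))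
      ≤ B * t ^ (-s) := S_upper s β hβ hs0 hs1 t ht
  have hIl : a * t ^ (-s) ≤ ∫ u in (0:ℝ)..1, u ^ (s - 1) * exp (-2 * u * t) :=
    I_lower s t hs0 hs1 ht
  have hIu : (∫ u in (0:ℝ)..1, u ^ (s - 1) * exp (-2 * u * t)) ≤ b * t ^ (-s) :=
    I_upper s t hs0 hs1 ht
  have hts0 : (0:ℝ) < t ^ (-s) := Real.rpow_pos_of_pos ht0 _
  have hP0 : (0:ℝ) < (t + 1) ^ (-s) := Real.rpow_pos_of_pos (by linarith) _
  have hI0 : (0:ℝ) < ∫ u in (0:ℝ)..1, u ^ (s - 1) * exp (-2 * u * t) :=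
    lt_of_lt_of_le (by positivity) hIl
  have hts : (t + 1) ^ (-s) ≤ t ^ (-s) :=
    Real.rpow_le_rpow_of_nonpos ht0 (by linarith) (by linarith)
  have hst : t ^ (-s) ≤ 2 ^ s * (t + 1) ^ (-s) := by
    have h1 : ((2 * t : ℝ)) ^ (-s) ≤ (t + 1) ^ (-s) :=
      Real.rpow_le_rpow_of_nonpos (by linarith) (by linarith) (by linarith)
    have h2 : ((2 * t : ℝ)) ^ (-s) = 2 ^ (-s) * t ^ (-s) :=
      Real.mul_rpow (by norm_num) (le_of_lt ht0)
    have h3 : (2:ℝ) ^ s * (2:ℝ) ^ (-s) = 1 := by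
      rw [← Real.rpow_add (by norm_num : (0:ℝ) < 2)]; norm_num
    calc t ^ (-s) = 2 ^ s * ((2 * t) ^ (-s)) := by rw [h2, ← mul_assoc, h3, one_mul]
      _ ≤ 2 ^ s * (t + 1) ^ (-s) :=
        mul_le_mul_of_nonneg_left h1 (Real.rpow_nonneg (by norm_num) s)
  refine ⟨⟨?_, ?_⟩, ?_, ?_⟩
  · calc min A (A / b) * (∫ u in (0:ℝ)..1, u ^ (s - 1) * exp (-2 * u * t))
        ≤ (A / b) * (∫ u in (0:ℝ)..1, u ^ (s - 1) * exp (-2 * u * t)) :=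
          mul_le_mul_of_nonneg_right (min_le_right _ _) (le_of_lt hI0)
      _ ≤ (A / b) * (b * t ^ (-s)) :=
          mul_le_mul_of_nonneg_left hIu (le_of_lt (div_pos hA hb))
      _ = A * t ^ (-s) := by field_simp
      _ ≤ _ := hSl
  · calc (∑' j : ℕ, ((j : ℝ) + 1) ^ (-(1 + s * β)) * exp (-2 * ((j : ℝ) + 1) ^ (-β) * t))
        ≤ B * t ^ (-s) := hSu
      _ = (B / a) * (a * t ^ (-s)) := by field_simp
      _ ≤ (B / a) * (∫ u in (0:ℝ)..1, u ^ (s - 1) * exp (-2 * u * t)) :=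
          mul_le_mul_of_nonneg_left hIl (le_of_lt (div_pos hB ha))
      _ ≤ max (B * 2 ^ s) (B / a) * (∫ u in (0:ℝ)..1, u ^ (s - 1) * exp (-2 * u * t)) :=
          mul_le_mul_of_nonneg_right (le_max_right _ _) (le_of_lt hI0)
  · calc min A (A / b) * (t + 1) ^ (-s)
        ≤ A * (t + 1) ^ (-s) := mul_le_mul_of_nonneg_right (min_le_left _ _) (le_of_lt hP0)
      _ ≤ A * t ^ (-s) := mul_le_mul_of_nonneg_left hts (le_of_lt hA)
      _ ≤ _ := hSl
  · calc (∑' j : ℕ, ((j : ℝ) + 1) ^ (-(1 + s * β)) * exp (-2 * ((j : ℝ) + 1) ^ (-β) * t))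
        ≤ B * t ^ (-s) := hSu
      _ ≤ B * (2 ^ s * (t + 1) ^ (-s)) := mul_le_mul_of_nonneg_left hst (le_of_lt hB)
      _ = (B * 2 ^ s) * (t + 1) ^ (-s) := by ring
      _ ≤ max (B * 2 ^ s) (B / a) * (t + 1) ^ (-s) :=
          mul_le_mul_of_nonneg_right (le_max_left _ _) (le_of_lt hP0)
end

section
/- For β > 1, the sum Σ_{j=1}^∞ j^{-2β} e^{-2 j^{-β} t} is bounded above and below by constant multiples (depending only on β) of ∫₀¹ u^{1-1/β} e^{-2ut} du for all t ≥ 0, and hence by constant multiples of (t+1)^{-(2-1/β)}. -/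
/-!
With `λ = (j + 1) ^ (-β)` each term of the sum is `(λ e^{-λt})²`, and `λ e^{-λt} ≤ 1 / (t + 1)`
since `e^{λt} ≥ 1 + λt ≥ λ (t + 1)`. Cut the sum at `N = ⌈(t + 1) ^ (1 / β)⌉`: the `N` head terms
contribute at most `N / (t + 1)²`, the tail at most the `p`-series tail `N ^ (1 - 2β) / (2β - 1)`,
and the `N` terms with `N ≤ j < 2N` have `λt ≤ 1`, so each is at least `e⁻² (2N) ^ (-2β)`. All
three are of order `(t + 1) ^ (-(2 - 1 / β))`. So is the integral: on `[0, 1 / (t + 1)]` the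
exponential is at least `e⁻²`, and `e^{-2ut} ≤ e² e^{-2u(t + 1)}` turns the integral over `(0, ∞)`
into a Gamma integral. Comparability (`=Θ`) being transitive, the sum is comparable to the
integral as well.
-/

open Real Set MeasureTheory Filter Asymptotics

section Theta

variable {α : Type*} {f g : α → ℝ} {s : Set α}

theorem isTheta_principal_iff_of_nonneg (hf : ∀ x ∈ s, 0 ≤ f x) (hg : ∀ x ∈ s, 0 ≤ g x) :
    f =Θ[𝓟 s] g ↔
      ∃ c₁ c₂ : ℝ, 0 < c₁ ∧ 0 < c₂ ∧ ∀ x ∈ s, c₁ * g x ≤ f x ∧ f x ≤ c₂ * g x := by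
  have norms : ∀ x ∈ s, ‖f x‖ = f x ∧ ‖g x‖ = g x := fun x hx =>
    ⟨norm_of_nonneg (hf x hx), norm_of_nonneg (hg x hx)⟩
  constructor
  · rintro ⟨hfg, hgf⟩
    obtain ⟨c₂, hc₂, hfg⟩ := hfg.exists_pos
    obtain ⟨c, hc, hgf⟩ := hgf.exists_pos
    rw [isBigOWith_principal] at hfg hgf
    refine ⟨c⁻¹, c₂, inv_pos.2 hc, hc₂, fun x hx => ⟨?_, ?_⟩⟩
    · have := hgf x hx
      rw [(norms x hx).1, (norms x hx).2] at this
      rwa [inv_mul_le_iff₀ hc]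
    · simpa only [(norms x hx).1, (norms x hx).2] using hfg x hx
  · rintro ⟨c₁, c₂, hc₁, -, h⟩
    refine ⟨isBigO_principal.2 ⟨c₂, fun x hx => ?_⟩, isBigO_principal.2 ⟨c₁⁻¹, fun x hx => ?_⟩⟩
    · simpa only [(norms x hx).1, (norms x hx).2] using (h x hx).2
    · rw [(norms x hx).1, (norms x hx).2, inv_mul_eq_div, le_div_iff₀ hc₁, mul_comm]
      exact (h x hx).1

end Theta

section Integral

variable {a c t : ℝ}

theorem intervalIntegrable_rpow_mul_exp (ha : 0 < a) (c t x y : ℝ) :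
    IntervalIntegrable (fun u => u ^ (a - 1) * exp (-c * u * t)) volume x y :=
  (intervalIntegral.intervalIntegrable_rpow' (by linarith)).mul_continuousOn (by fun_prop)

theorem exp_neg_div_mul_rpow_neg_le_integral (ha : 0 < a) (hc : 0 ≤ c) (ht : 0 ≤ t) :
    exp (-c) / a * (t + 1) ^ (-a) ≤ ∫ u in (0:ℝ)..1, u ^ (a - 1) * exp (-c * u * t) := by
  have ht₁ : 0 < t + 1 := by linarith
  set s := (t + 1)⁻¹
  have hs₀ : 0 < s := by positivity
  have hs₁ : s ≤ 1 := inv_le_one_of_one_le₀ (by linarith)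
  calc exp (-c) / a * (t + 1) ^ (-a) = ∫ u in (0:ℝ)..s, u ^ (a - 1) * exp (-c) := by
        rw [intervalIntegral.integral_mul_const, integral_rpow (Or.inl (by linarith)),
          sub_add_cancel, zero_rpow ha.ne', inv_rpow ht₁.le, rpow_neg ht₁.le]
        ring
    _ ≤ ∫ u in (0:ℝ)..s, u ^ (a - 1) * exp (-c * u * t) := by
        refine intervalIntegral.integral_mono_on hs₀.le
          ((intervalIntegral.intervalIntegrable_rpow' (by linarith)).mul_const _)
          (intervalIntegrable_rpow_mul_exp ha c t 0 s) fun u hu => ?_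
        have hut : u * t ≤ 1 := by
          have := mul_le_mul_of_nonneg_right hu.2 ht₁.le
          rw [inv_mul_cancel₀ ht₁.ne'] at this
          nlinarith [hu.1]
        gcongr
        · exact rpow_nonneg hu.1 _
        · nlinarith
    _ ≤ ∫ u in (0:ℝ)..1, u ^ (a - 1) * exp (-c * u * t) :=
        intervalIntegral.integral_mono_interval le_rfl hs₀.le hs₁
          ((ae_restrict_mem measurableSet_Ioc).mono fun u hu =>
            mul_nonneg (rpow_nonneg hu.1.le _) (exp_pos _).le)
          (intervalIntegrable_rpow_mul_exp ha c t 0 1)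

theorem integral_le_exp_mul_Gamma_mul_rpow_neg (ha : 0 < a) (hc : 0 < c) (ht : 0 ≤ t) :
    ∫ u in (0:ℝ)..1, u ^ (a - 1) * exp (-c * u * t)
      ≤ exp c * c ^ (-a) * Gamma a * (t + 1) ^ (-a) := by
  set r := c * (t + 1)
  have hr : 0 < r := by positivity
  have hΓ := integral_rpow_mul_exp_neg_mul_Ioi ha hr
  -- integrability is read off from the nonzero value of the Gamma integral
  have hint : IntegrableOn (fun u => u ^ (a - 1) * exp (-(r * u))) (Ioi 0) :=
    Integrable.of_integral_ne_zero (by rw [hΓ]; positivity)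
  calc ∫ u in (0:ℝ)..1, u ^ (a - 1) * exp (-c * u * t)
      ≤ ∫ u in (0:ℝ)..1, exp c * (u ^ (a - 1) * exp (-(r * u))) := by
        refine intervalIntegral.integral_mono_on zero_le_one
          (intervalIntegrable_rpow_mul_exp ha c t 0 1) ?_ fun u hu => ?_
        · exact ((intervalIntegral.intervalIntegrable_rpow' (by linarith)).mul_continuousOn
            (by fun_prop)).const_mul _
        · rw [mul_left_comm, ← exp_add]
          gcongr
          · exact rpow_nonneg hu.1 _
          · nlinarith [hu.2]
    _ = exp c * ∫ u in Ioc 0 1, u ^ (a - 1) * exp (-(r * u)) := by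
        rw [intervalIntegral.integral_const_mul, intervalIntegral.integral_of_le zero_le_one]
    _ ≤ exp c * ∫ u in Ioi 0, u ^ (a - 1) * exp (-(r * u)) := by
        refine mul_le_mul_of_nonneg_left (setIntegral_mono_set hint ?_
          Ioc_subset_Ioi_self.eventuallyLE) (exp_pos c).le
        exact (ae_restrict_mem measurableSet_Ioi).mono fun u hu =>
          mul_nonneg (rpow_nonneg (le_of_lt hu) _) (exp_pos _).le
    _ = exp c * c ^ (-a) * Gamma a * (t + 1) ^ (-a) := by
        rw [hΓ, one_div, mul_inv, mul_rpow (by positivity) (by positivity), inv_rpow hc.le,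
          inv_rpow (by positivity), ← rpow_neg hc.le, ← rpow_neg (by positivity)]
        ring

theorem integral_rpow_mul_exp_nonneg (p c t : ℝ) :
    0 ≤ ∫ u in (0:ℝ)..1, u ^ p * exp (-c * u * t) :=
  intervalIntegral.integral_nonneg zero_le_one fun _ hu =>
    mul_nonneg (rpow_nonneg hu.1 _) (exp_pos _).le

theorem integral_rpow_mul_exp_isTheta (ha : 0 < a) (hc : 0 < c) :
    (fun t => ∫ u in (0:ℝ)..1, u ^ (a - 1) * exp (-c * u * t))
      =Θ[𝓟 (Ici 0)] fun t => (t + 1) ^ (-a) :=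
  (isTheta_principal_iff_of_nonneg (fun t _ => integral_rpow_mul_exp_nonneg _ c t)
    (fun t (ht : 0 ≤ t) => rpow_nonneg (by linarith) _)).2
      ⟨exp (-c) / a, exp c * c ^ (-a) * Gamma a, by positivity, by positivity,
        fun t ht => ⟨exp_neg_div_mul_rpow_neg_le_integral ha hc.le ht,
          integral_le_exp_mul_Gamma_mul_rpow_neg ha hc ht⟩⟩

end Integral

theorem mul_exp_neg_mul_le_inv {a t : ℝ} (ha : a ≤ 1) (ht : 0 < t + 1) :
    a * exp (-(a * t)) ≤ (t + 1)⁻¹ := by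
  have h : a * (t + 1) ≤ exp (a * t) := by nlinarith [add_one_le_exp (a * t)]
  rw [exp_neg, ← div_eq_mul_inv, div_le_iff₀ (exp_pos _), inv_mul_eq_div, le_div_iff₀ ht]
  exact h

theorem tsum_nat_add_rpow_neg_le {s : ℝ} (hs : 1 < s) {N : ℕ} (hN : 0 < N) :
    ∑' n : ℕ, ((n + N + 1 : ℕ) : ℝ) ^ (-s) ≤ (N : ℝ) ^ (1 - s) / (s - 1) := by
  have hN' : (0 : ℝ) < N := by exact_mod_cast hN
  calc ∑' n : ℕ, ((n + N + 1 : ℕ) : ℝ) ^ (-s) ≤ ∫ x in Ioi (N : ℝ), x ^ (-s) :=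
        (antitoneOn_rpow_Ioi_of_exponent_nonpos (by linarith)).mono (Ici_subset_Ioi.2 hN')
          |>.tsum_comp_add_le_integral N (integrableOn_Ioi_rpow_of_lt (by linarith) hN')
            fun x hx => rpow_nonneg (hN'.trans hx).le _
    _ = (N : ℝ) ^ (1 - s) / (s - 1) := by
        rw [integral_Ioi_rpow_of_lt (by linarith) hN', neg_div, ← div_neg]
        ring_nf

theorem summable_nat_add_rpow_neg {s : ℝ} (hs : 1 < s) (k : ℕ) :
    Summable fun n : ℕ => ((n + k : ℕ) : ℝ) ^ (-s) :=
  (summable_nat_add_iff k).2 (Real.summable_nat_rpow.2 (by linarith))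

section Kernel

variable {β t x : ℝ}

noncomputable def kernelTerm (β t x : ℝ) : ℝ := x ^ (-(2 * β)) * exp (-2 * x ^ (-β) * t)

noncomputable def forgettingKernel (β t : ℝ) : ℝ := ∑' j : ℕ, kernelTerm β t ((j : ℝ) + 1)

theorem kernelTerm_nonneg (hx : 0 ≤ x) : 0 ≤ kernelTerm β t x := by
  unfold kernelTerm; positivity

theorem kernelTerm_eq_sq (hx : 0 ≤ x) :
    kernelTerm β t x = (x ^ (-β) * exp (-(x ^ (-β) * t))) ^ 2 := by
  rw [kernelTerm, mul_pow, ← rpow_natCast, ← rpow_mul hx, ← exp_nat_mul]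
  push_cast
  ring_nf

theorem kernelTerm_le_rpow (ht : 0 ≤ t) (hx : 0 ≤ x) : kernelTerm β t x ≤ x ^ (-(2 * β)) := by
  unfold kernelTerm
  refine mul_le_of_le_one_right (rpow_nonneg hx _) (exp_le_one_iff.2 ?_)
  have := rpow_nonneg hx (-β)
  nlinarith

theorem kernelTerm_le_inv_sq (hβ : 0 ≤ β) (ht : 0 ≤ t) (hx : 1 ≤ x) :
    kernelTerm β t x ≤ ((t + 1) ^ 2)⁻¹ := by
  rw [kernelTerm_eq_sq (by linarith), ← inv_pow]
  exact pow_le_pow_left₀ (by positivity)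
    (mul_exp_neg_mul_le_inv (rpow_le_one_of_one_le_of_nonpos hx (by linarith)) (by linarith)) 2

theorem rpow_mul_exp_neg_two_le_kernelTerm (hx : 0 < x)
    (hxt : t + 1 ≤ x ^ β) : x ^ (-(2 * β)) * exp (-2) ≤ kernelTerm β t x := by
  have hxt' : x ^ (-β) * t ≤ 1 := by
    rw [rpow_neg hx.le, inv_mul_le_iff₀ (by positivity)]
    linarith
  unfold kernelTerm
  gcongr
  linarith

theorem summable_kernelTerm (hβ : 1 / 2 < β) (ht : 0 ≤ t) :
    Summable fun j : ℕ => kernelTerm β t ((j : ℝ) + 1) :=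
  .of_nonneg_of_le (fun j => kernelTerm_nonneg (by positivity))
    (fun j => kernelTerm_le_rpow ht (by positivity))
    (by exact_mod_cast summable_nat_add_rpow_neg (s := 2 * β) (by linarith) 1)

theorem forgettingKernel_nonneg : 0 ≤ forgettingKernel β t :=
  tsum_nonneg fun j => kernelTerm_nonneg (by positivity)

theorem forgettingKernel_le (hβ : 1 / 2 < β) (ht : 0 ≤ t) {N : ℕ} (hN : 0 < N) :
    forgettingKernel β t ≤ N * ((t + 1) ^ 2)⁻¹ + (N : ℝ) ^ (1 - 2 * β) / (2 * β - 1) := by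
  have hsum := summable_kernelTerm hβ ht
  rw [forgettingKernel, ← hsum.sum_add_tsum_nat_add N]
  gcongr
  · calc ∑ j ∈ Finset.range N, kernelTerm β t ((j : ℝ) + 1)
        ≤ (Finset.range N).card • ((t + 1) ^ 2)⁻¹ :=
          Finset.sum_le_card_nsmul _ _ _ fun j _ =>
            kernelTerm_le_inv_sq (by linarith) ht (by simp)
      _ = N * ((t + 1) ^ 2)⁻¹ := by rw [Finset.card_range, nsmul_eq_mul]
  · calc ∑' i : ℕ, kernelTerm β t (((i + N : ℕ) : ℝ) + 1)
        ≤ ∑' i : ℕ, ((i + N + 1 : ℕ) : ℝ) ^ (-(2 * β)) :=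
          (hsum.comp_injective (add_left_injective N)).tsum_le_tsum
            (fun i => by exact_mod_cast kernelTerm_le_rpow ht (by positivity))
            (summable_nat_add_rpow_neg (by linarith) (N + 1))
      _ ≤ (N : ℝ) ^ (1 - 2 * β) / (2 * β - 1) := tsum_nat_add_rpow_neg_le (by linarith) hN

theorem rpow_mul_le_forgettingKernel (hβ : 1 / 2 < β) (ht : 0 ≤ t) {N : ℕ} (hN : 0 < N)
    (hNt : t + 1 ≤ (N : ℝ) ^ β) :
    2 ^ (-(2 * β)) * exp (-2) * (N : ℝ) ^ (1 - 2 * β) ≤ forgettingKernel β t := by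
  have hN' : (0 : ℝ) < N := by exact_mod_cast hN
  calc 2 ^ (-(2 * β)) * exp (-2) * (N : ℝ) ^ (1 - 2 * β)
      = (Finset.Ico N (2 * N)).card • ((2 * N : ℝ) ^ (-(2 * β)) * exp (-2)) := by
        rw [Nat.card_Ico, nsmul_eq_mul, mul_rpow zero_le_two hN'.le,
          show 1 - 2 * β = -(2 * β) + 1 by ring, rpow_add_one hN'.ne']
        push_cast [show 2 * N - N = N by omega]
        ring
    _ ≤ ∑ j ∈ Finset.Ico N (2 * N), kernelTerm β t ((j : ℝ) + 1) := by
        refine Finset.card_nsmul_le_sum _ _ _ fun j hj => ?_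
        obtain ⟨hNj, hj2N⟩ := Finset.mem_Ico.1 hj
        have hNj : (N : ℝ) ≤ j + 1 := by exact_mod_cast hNj.trans (Nat.le_succ j)
        have hj2N : (j : ℝ) + 1 ≤ 2 * N := by exact_mod_cast hj2N
        calc (2 * N : ℝ) ^ (-(2 * β)) * exp (-2) ≤ ((j : ℝ) + 1) ^ (-(2 * β)) * exp (-2) :=
              mul_le_mul_of_nonneg_right
                (rpow_le_rpow_of_nonpos (by positivity) hj2N (by linarith)) (exp_pos _).le
          _ ≤ kernelTerm β t ((j : ℝ) + 1) :=
              rpow_mul_exp_neg_two_le_kernelTerm (by positivity)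
                (hNt.trans (rpow_le_rpow hN'.le hNj (by linarith)))
    _ ≤ forgettingKernel β t :=
        (summable_kernelTerm hβ ht).sum_le_tsum _ fun j _ => kernelTerm_nonneg (by positivity)

end Kernel

theorem rpow_one_div_rpow_one_sub_two_mul {x β : ℝ} (hx : 0 ≤ x) (hβ : β ≠ 0) :
    (x ^ (1 / β)) ^ (1 - 2 * β) = x ^ (-(2 - 1 / β)) := by
  rw [← rpow_mul hx]
  congr 1
  field_simp
  ring

theorem forgettingKernel_isTheta {β : ℝ} (hβ : 1 / 2 < β) :
    forgettingKernel β =Θ[𝓟 (Ici 0)] fun t => (t + 1) ^ (-(2 - 1 / β)) := by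
  refine (isTheta_principal_iff_of_nonneg (fun _ _ => forgettingKernel_nonneg)
    (fun t (ht : 0 ≤ t) => rpow_nonneg (by linarith) _)).2
      ⟨2 ^ (-(2 * β)) * exp (-2) * 2 ^ (1 - 2 * β), 2 + 1 / (2 * β - 1),
        by positivity, by linarith [one_div_pos.2 (by linarith : 0 < 2 * β - 1)],
        fun t (ht : 0 ≤ t) => ?_⟩
  have hβ₀ : 0 < β := by linarith
  have ht₁ : 0 < t + 1 := by linarith
  set Q := (t + 1) ^ (1 / β)
  have hQ₁ : 1 ≤ Q := one_le_rpow (by linarith) (by positivity)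
  have hQβ : Q ^ β = t + 1 := by rw [← rpow_mul ht₁.le, one_div_mul_cancel hβ₀.ne', rpow_one]
  have hsq : (t + 1) ^ 2 = Q ^ (2 * β) := by
    rw [← hQβ, ← rpow_natCast, ← rpow_mul (by linarith)]
    push_cast
    ring_nf
  set N := ⌈Q⌉₊
  have hQN : Q ≤ N := Nat.le_ceil Q
  have hNQ : (N : ℝ) ≤ 2 * Q := Nat.ceil_le_two_mul (by linarith)
  have hN : 0 < N := Nat.ceil_pos.2 (by linarith)
  rw [← rpow_one_div_rpow_one_sub_two_mul ht₁.le hβ₀.ne']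
  constructor
  · calc 2 ^ (-(2 * β)) * exp (-2) * 2 ^ (1 - 2 * β) * Q ^ (1 - 2 * β)
        = 2 ^ (-(2 * β)) * exp (-2) * (2 * Q) ^ (1 - 2 * β) := by
          rw [mul_rpow zero_le_two (by linarith)]
          ring
      _ ≤ 2 ^ (-(2 * β)) * exp (-2) * (N : ℝ) ^ (1 - 2 * β) := by
          have hN₀ : (0 : ℝ) < N := by exact_mod_cast hN
          exact mul_le_mul_of_nonneg_left
            (rpow_le_rpow_of_nonpos hN₀ hNQ (by linarith : 1 - 2 * β ≤ 0)) (by positivity)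
      _ ≤ forgettingKernel β t := by
          refine rpow_mul_le_forgettingKernel hβ ht hN ?_
          rw [← hQβ]
          exact rpow_le_rpow (by linarith) hQN hβ₀.le
  · calc forgettingKernel β t ≤ N * ((t + 1) ^ 2)⁻¹ + (N : ℝ) ^ (1 - 2 * β) / (2 * β - 1) :=
          forgettingKernel_le hβ ht hN
      _ ≤ 2 * Q * ((t + 1) ^ 2)⁻¹ + Q ^ (1 - 2 * β) / (2 * β - 1) := by
          have := rpow_le_rpow_of_nonpos (by linarith) hQN (by linarith : 1 - 2 * β ≤ 0)
          gcongr
          linarith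
      _ = (2 + 1 / (2 * β - 1)) * Q ^ (1 - 2 * β) := by
          rw [rpow_sub (by linarith), rpow_one, hsq]
          ring

/-- For `β > 1`, the forgetting-kernel sum `Σ_{j≥1} j^{-2β} e^{-2 j^{-β} t}` is comparable,
uniformly over `t ≥ 0`, both to `∫₀¹ u^{1-1/β} e^{-2ut} du` and to `(t+1)^{-(2-1/β)}`. -/
theorem kernel_sum_integral_comparison (β : ℝ) (hβ : 1 < β) :
    ∃ c₁ c₂ : ℝ, 0 < c₁ ∧ 0 < c₂ ∧ ∀ t : ℝ, 0 ≤ t →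
      (c₁ * (∫ u in (0:ℝ)..1, u ^ (1 - 1 / β) * exp (-2 * u * t))
          ≤ (∑' j : ℕ, ((j : ℝ) + 1) ^ (-(2 * β)) * exp (-2 * ((j : ℝ) + 1) ^ (-β) * t)) ∧
        (∑' j : ℕ, ((j : ℝ) + 1) ^ (-(2 * β)) * exp (-2 * ((j : ℝ) + 1) ^ (-β) * t))
          ≤ c₂ * ∫ u in (0:ℝ)..1, u ^ (1 - 1 / β) * exp (-2 * u * t)) ∧
      (c₁ * (t + 1) ^ (-(2 - 1 / β))
          ≤ (∑' j : ℕ, ((j : ℝ) + 1) ^ (-(2 * β)) * exp (-2 * ((j : ℝ) + 1) ^ (-β) * t)) ∧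
        (∑' j : ℕ, ((j : ℝ) + 1) ^ (-(2 * β)) * exp (-2 * ((j : ℝ) + 1) ^ (-β) * t))
          ≤ c₂ * (t + 1) ^ (-(2 - 1 / β))) := by
  have hS := forgettingKernel_isTheta (β := β) (by linarith)
  have hI := integral_rpow_mul_exp_isTheta (a := 2 - 1 / β) (c := 2)
    (by linarith [(div_lt_one (by linarith : 0 < β)).2 hβ]) two_pos
  rw [show 2 - 1 / β - 1 = 1 - 1 / β by ring] at hI
  have hI₀ (t : ℝ) := integral_rpow_mul_exp_nonneg (1 - 1 / β) 2 t
  have hP₀ (t : ℝ) (ht : 0 ≤ t) : 0 ≤ (t + 1) ^ (-(2 - 1 / β)) := rpow_nonneg (by linarith) _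
  obtain ⟨a₁, a₂, ha₁, ha₂, hSI⟩ := (isTheta_principal_iff_of_nonneg
    (fun _ _ => forgettingKernel_nonneg) fun t _ => hI₀ t).1 (hS.trans hI.symm)
  obtain ⟨b₁, b₂, hb₁, -, hSP⟩ :=
    (isTheta_principal_iff_of_nonneg (fun _ _ => forgettingKernel_nonneg) hP₀).1 hS
  refine ⟨min a₁ b₁, max a₂ b₂, lt_min ha₁ hb₁, lt_max_of_lt_left ha₂, fun t ht =>
    ⟨⟨?_, ?_⟩, ?_, ?_⟩⟩
  · exact (mul_le_mul_of_nonneg_right (min_le_left _ _) (hI₀ t)).trans (hSI t ht).1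
  · exact (hSI t ht).2.trans (mul_le_mul_of_nonneg_right (le_max_left _ _) (hI₀ t))
  · exact (mul_le_mul_of_nonneg_right (min_le_right _ _) (hP₀ t ht)).trans (hSP t ht).1
  · exact (hSP t ht).2.trans (mul_le_mul_of_nonneg_right (le_max_right _ _) (hP₀ t ht))
end
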